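/- arXiv:1109.3137 — 5 statements merged into one kernel-verified Lean document; each statement's English description precedes it below -/
import Mathlib

section
/- If T is a locally finite tree with positive edge weights, then its metric completion (with respect to the minimal resistance path metric) is weakly connected: for every pair of distinct points u, v in the completion, there is a finite set W of edges such that every path from u to v contains an edge from W. -/
open UniformSpace Filter Topology
open scoped ENNReal

noncomputable section

/-- A locally finite edge-weighted (resistance) graph. -/
structure WGraph (V : Type*) where
  Adj : V → V → Prop
  symm : ∀ u v, Adj u v → Adj v u
  loopless : ∀ v, ¬ Adj v v
  R : V → V → ℝ
  Rsymm : ∀ u v, R u v = R v u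
  Rpos : ∀ u v, Adj u v → 0 < R u v
  locFin : ∀ v, {u | Adj u v}.Finite

namespace WGraph

variable {V : Type*} (G : WGraph V)

/-- The set of edges, as unordered pairs of vertices. -/
def edgeSet : Set (Sym2 V) := {e | ∃ u v, G.Adj u v ∧ e = s(u, v)}

/-- The set of total lengths of finite paths joining `u` to `v`. -/
def pathLengths (u v : V) : Set ℝ :=
  {L | ∃ (n : ℕ) (p : ℕ → V), p 0 = u ∧ p n = v ∧
        (∀ k < n, G.Adj (p k) (p (k + 1))) ∧
        L = ∑ k ∈ Finset.range n, G.R (p k) (p (k + 1))}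

/-- `G` is connected: any two vertices are joined by a finite path. -/
def Connected : Prop := ∀ u v : V, (G.pathLengths u v).Nonempty

/-- The metric on the vertex set is the minimal resistance path metric of `G`. -/
def IsPathMetric [MetricSpace V] : Prop :=
  ∀ u v : V, dist u v = sInf (G.pathLengths u v)

/-- Eventually flat functions: the values differ across only finitely many edges. -/
def EventuallyFlat (φ : V → ℝ) : Prop :=
  {p : V × V | G.Adj p.1 p.2 ∧ φ p.1 ≠ φ p.2}.Finite

open Classical in
/-- The conductance: the reciprocal resistance on edges, `0` off edges. -/
def cond (u v : V) : ℝ := if G.Adj u v then (G.R u v)⁻¹ else 0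

/-- `f` is harmonic at `v`: its value is the conductance-weighted average of the
values at the adjacent vertices. -/
def HarmonicAt (f : V → ℝ) (v : V) : Prop :=
  f v = (∑ u ∈ (G.locFin v).toFinset, G.cond u v)⁻¹ *
          ∑ u ∈ (G.locFin v).toFinset, G.cond u v * f u

/-- The weighted `ℓ²(μ)` inner product. -/
def winner (μ : V → ℝ) (f g : V → ℝ) : ℝ := ∑' v, f v * g v * μ v

/-- The bilinear (energy) form associated to conductances `C`. -/
def Bform (C : V → V → ℝ) (f g : V → ℝ) : ℝ :=
  (1 / 2) * ∑' p : V × V, C p.1 p.2 * (f p.1 - f p.2) * (g p.1 - g p.2)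

/-- The formal Laplacian `Δ_μ`. -/
def lap (C : V → V → ℝ) (μ : V → ℝ) (f : V → ℝ) (v : V) : ℝ :=
  (1 / μ v) * ∑' u, C u v * (f v - f u)

/-- The (possibly infinite) energy of `f`. -/
def energy (C : V → V → ℝ) (f : V → ℝ) : ℝ≥0∞ :=
  (1 / 2) * ∑' p : V × V, ENNReal.ofReal (C p.1 p.2 * (f p.1 - f p.2) ^ 2)

variable [MetricSpace V]

/-- A path in the completion `Ḡ` joining `x` and `y`: a two-sided sequence of
vertices (stationary steps are allowed, so this encodes finite paths, rays and
double rays) converging to `x` and `y` at its two ends. -/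
structure CPath (x y : Completion V) where
  p : ℤ → V
  step : ∀ k, p k = p (k + 1) ∨ G.Adj (p k) (p (k + 1))
  tendsto_left : Tendsto (fun n : ℕ => ((p (-(n : ℤ)) : V) : Completion V)) atTop (nhds x)
  tendsto_right : Tendsto (fun n : ℕ => ((p (n : ℤ) : V) : Completion V)) atTop (nhds y)

end WGraph

/-- The path `γ` uses (contains) the edge `e`. -/
def WGraph.CPath.uses {V : Type*} [MetricSpace V] {G : WGraph V}
    {x y : Completion V} (γ : G.CPath x y) (e : Sym2 V) : Prop :=
  ∃ k : ℤ, γ.p k ≠ γ.p (k + 1) ∧ e = s(γ.p k, γ.p (k + 1))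

namespace WGraph

variable {V : Type*} (G : WGraph V) [MetricSpace V]

/-- The completion `Ḡ` is weakly connected: any two distinct points admit a
finite set of edges met by every path joining them. -/
def WeaklyConnected : Prop :=
  ∀ x y : Completion V, x ≠ y →
    ∃ W : Set (Sym2 V), W.Finite ∧ W ⊆ G.edgeSet ∧
      ∀ γ : G.CPath x y, ∃ e ∈ W, γ.uses e

end WGraph



namespace TreeProofAux

variable {V : Type*}

/-- Lazy-walk step condition up to `m`. -/
def Steps (G : WGraph V) (q : ℕ → V) (m : ℕ) : Prop :=
  ∀ k < m, q k = q (k+1) ∨ G.Adj (q k) (q (k+1))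

/-- The walk avoids the edge `e`. -/
def Avoids (G : WGraph V) (q : ℕ → V) (m : ℕ) (e : Sym2 V) : Prop :=
  ∀ k < m, q k ≠ q (k+1) → s(q k, q (k+1)) ≠ e

/-- `a` and `b` are joined by a lazy walk avoiding `e`. -/
def Conn (G : WGraph V) (e : Sym2 V) (a b : V) : Prop :=
  ∃ m q, q 0 = a ∧ q m = b ∧ Steps G q m ∧ Avoids G q m e

lemma Conn.refl (G : WGraph V) (e : Sym2 V) (a : V) : Conn G e a a :=
  ⟨0, fun _ => a, rfl, rfl, fun k hk => absurd hk (Nat.not_lt_zero k),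
    fun k hk => absurd hk (Nat.not_lt_zero k)⟩

lemma Conn.symm {G : WGraph V} {e : Sym2 V} {a b : V} (h : Conn G e a b) :
    Conn G e b a := by
  obtain ⟨m, q, h0, hm, hs, ha⟩ := h
  refine ⟨m, fun k => q (m - k), by simpa using hm, by simpa using h0, ?_, ?_⟩
  · intro k hk
    show q (m - k) = q (m - (k+1)) ∨ G.Adj (q (m - k)) (q (m - (k+1)))
    have h1 : m - k = (m - (k+1)) + 1 := by omega
    rcases hs (m - (k+1)) (by omega) with h | h
    · left; rw [h1, h]
    · right; rw [h1]; exact G.symm _ _ h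
  · intro k hk hne hcon
    replace hne : q (m - k) ≠ q (m - (k+1)) := hne
    replace hcon : s(q (m - k), q (m - (k+1))) = e := hcon
    have h1 : m - k = (m - (k+1)) + 1 := by omega
    refine ha (m - (k+1)) (by omega) (by rw [← h1]; exact fun hh => hne hh.symm) ?_
    rw [← h1, Sym2.eq_swap]; exact hcon

lemma Conn.trans {G : WGraph V} {e : Sym2 V} {a b c : V}
    (h1 : Conn G e a b) (h2 : Conn G e b c) : Conn G e a c := by
  obtain ⟨m1, q1, h10, h1m, h1s, h1a⟩ := h1
  obtain ⟨m2, q2, h20, h2m, h2s, h2a⟩ := h2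
  refine ⟨m1 + m2, fun k => if k < m1 then q1 k else q2 (k - m1), ?_, ?_, ?_, ?_⟩
  · by_cases h : (0:ℕ) < m1
    · simp only [if_pos h]; exact h10
    · simp only [if_neg h]
      have hm0 : m1 = 0 := by omega
      subst hm0; simp only [Nat.sub_zero]; rw [h20, ← h1m, h10]
  · simp only [if_neg (by omega : ¬ m1 + m2 < m1)]
    simpa using h2m
  · intro k hk
    by_cases hk1 : k + 1 < m1
    · simp only [if_pos (by omega : k < m1), if_pos hk1]
      exact h1s k (by omega)
    · by_cases hk2 : k < m1
      · -- k + 1 = m1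
        have hkm : k + 1 = m1 := by omega
        simp only [if_pos hk2, if_neg hk1]
        have : q2 (k + 1 - m1) = q1 (k+1) := by
          rw [hkm]; simp [h20, ← h1m, hkm]
        rw [this]; exact h1s k (by omega)
      · simp only [if_neg hk2, if_neg hk1]
        have : k + 1 - m1 = (k - m1) + 1 := by omega
        rw [this]; exact h2s (k - m1) (by omega)
  · intro k hk
    by_cases hk1 : k + 1 < m1
    · simp only [if_pos (by omega : k < m1), if_pos hk1]
      exact h1a k (by omega)
    · by_cases hk2 : k < m1
      · have hkm : k + 1 = m1 := by omega
        simp only [if_pos hk2, if_neg hk1]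
        have : q2 (k + 1 - m1) = q1 (k+1) := by
          rw [hkm]; simp [h20, ← h1m, hkm]
        rw [this]; exact h1a k (by omega)
      · simp only [if_neg hk2, if_neg hk1]
        have : k + 1 - m1 = (k - m1) + 1 := by omega
        rw [this]; exact h2a (k - m1) (by omega)

end TreeProofAux

namespace TreeProofAux

variable {V : Type*}

/-- Splice out the loop from `i` to `j` in a lazy walk. -/
lemma splice {G : WGraph V} {e : Sym2 V} {a b : V} {q : ℕ → V} {m i j : ℕ}
    (hij : i < j) (hjm : j ≤ m) (hq : q i = q j)
    (h0 : q 0 = a) (hm : q m = b) (hs : Steps G q m) (ha : Avoids G q m e) :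
    ∃ q' : ℕ → V, q' 0 = a ∧ q' (m + i - j) = b ∧
      Steps G q' (m + i - j) ∧ Avoids G q' (m + i - j) e := by
  refine ⟨fun k => if k < i then q k else q (k + (j - i)), ?_, ?_, ?_, ?_⟩
  · by_cases h : (0:ℕ) < i
    · simp only [if_pos h]; exact h0
    · simp only [if_neg h]
      have : i = 0 := by omega
      subst this
      simp only [Nat.zero_add, Nat.sub_zero]
      rw [← hq, h0]
  · have h1 : ¬ (m + i - j < i) := by omega
    simp only [if_neg h1]
    have : m + i - j + (j - i) = m := by omega
    rw [this, hm]
  · intro k hk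
    have key : ∀ t, t ≤ m + i - j →
        (if t < i then q t else q (t + (j - i))) =
          (if t < i then q t else q (t + (j - i))) := fun _ _ => rfl
    by_cases hki : k < i
    · by_cases hki1 : k + 1 < i
      · simp only [if_pos hki, if_pos hki1]
        exact hs k (by omega)
      · have hk1 : k + 1 = i := by omega
        simp only [if_pos hki, if_neg hki1]
        have : q (k + 1 + (j - i)) = q (k + 1) := by
          rw [hk1]
          have : i + (j - i) = j := by omega
          rw [this, ← hq]
        rw [this]
        exact hs k (by omega)
    · simp only [if_neg hki, if_neg (by omega : ¬ k + 1 < i)]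
      have : k + 1 + (j - i) = (k + (j - i)) + 1 := by omega
      rw [this]
      exact hs (k + (j - i)) (by omega)
  · intro k hk
    by_cases hki : k < i
    · by_cases hki1 : k + 1 < i
      · simp only [if_pos hki, if_pos hki1]
        exact ha k (by omega)
      · have hk1 : k + 1 = i := by omega
        simp only [if_pos hki, if_neg hki1]
        have heq : q (k + 1 + (j - i)) = q (k + 1) := by
          rw [hk1]
          have : i + (j - i) = j := by omega
          rw [this, ← hq]
        rw [heq]
        exact ha k (by omega)
    · simp only [if_neg hki, if_neg (by omega : ¬ k + 1 < i)]
      have : k + 1 + (j - i) = (k + (j - i)) + 1 := by omega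
      rw [this]
      exact ha (k + (j - i)) (by omega)

/-- From any lazy walk avoiding `e` we can extract a simple strict walk avoiding `e`. -/
lemma exists_simple {G : WGraph V} {e : Sym2 V} {a b : V} (h : Conn G e a b) :
    ∃ (m : ℕ) (q : ℕ → V), q 0 = a ∧ q m = b ∧ (∀ k < m, G.Adj (q k) (q (k+1))) ∧
      (∀ k < m, s(q k, q (k+1)) ≠ e) ∧
      (∀ i ≤ m, ∀ j ≤ m, q i = q j → i = j) := by
  obtain ⟨m, q, h0, hm, hs, ha⟩ := h
  induction m using Nat.strong_induction_on generalizing q with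
  | _ m IH =>
    by_cases hrep : ∃ i j, i < j ∧ j ≤ m ∧ q i = q j
    · obtain ⟨i, j, hij, hjm, hq⟩ := hrep
      obtain ⟨q', h0', hm', hs', ha'⟩ := splice hij hjm hq h0 hm hs ha
      exact IH (m + i - j) (by omega) q' h0' hm' hs' ha'
    · push_neg at hrep
      refine ⟨m, q, h0, hm, ?_, ?_, ?_⟩
      · intro k hk
        rcases hs k hk with h | h
        · exact absurd h (hrep k (k+1) (Nat.lt_succ_self k) hk)
        · exact h
      · intro k hk
        exact ha k hk (hrep k (k+1) (Nat.lt_succ_self k) hk)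
      · intro i hi j hj hqij
        by_contra hne
        rcases Nat.lt_or_ge i j with h | h
        · exact hrep i j h hj hqij
        · exact hrep j i (by omega) hi hqij.symm

end TreeProofAux

namespace TreeProofAux

variable {V : Type*}

/-- In a tree, the two endpoints of an edge cannot be joined by a walk avoiding
that edge. -/
lemma no_conn {G : WGraph V}
    (htree : ∀ (n : ℕ) (p : ℕ → V), 3 ≤ n →
      (∀ k < n, G.Adj (p k) (p (k + 1))) → p n = p 0 →
      ¬ Function.Injective (fun k : Fin n => p (k : ℕ)))
    {w w' : V} (hadj : G.Adj w w') : ¬ Conn G s(w, w') w w' := by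
  intro h
  obtain ⟨m, q, h0, hm, hs, ha, hinj⟩ := exists_simple h
  have hww' : w ≠ w' := by
    intro hcon
    exact G.loopless w' (hcon ▸ hadj)
  have hm0 : m ≠ 0 := by
    intro hcon
    subst hcon
    exact hww' (h0 ▸ hm ▸ rfl)
  have hm1 : m ≠ 1 := by
    intro hcon
    subst hcon
    exact ha 0 Nat.one_pos (by rw [h0, hm])
  set p : ℕ → V := fun k => if k ≤ m then q k else w with hp
  have h3 : 3 ≤ m + 1 := by omega
  have hsteps : ∀ k < m + 1, G.Adj (p k) (p (k + 1)) := by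
    intro k hk
    by_cases hkm : k < m
    · have : p k = q k := by simp only [hp]; rw [if_pos (by omega : k ≤ m)]
      have h2 : p (k+1) = q (k+1) := by simp only [hp]; rw [if_pos (by omega : k + 1 ≤ m)]
      rw [this, h2]
      exact hs k hkm
    · have hkm' : k = m := by omega
      have : p k = q k := by simp only [hp]; rw [if_pos (by omega : k ≤ m)]
      have h2 : p (k+1) = w := by simp only [hp]; rw [if_neg (by omega : ¬ k + 1 ≤ m)]
      rw [this, h2, hkm', hm]
      exact G.symm _ _ hadj
  have hclosed : p (m + 1) = p 0 := by
    simp [hp, h0]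
  have := htree (m+1) p h3 hsteps hclosed
  apply this
  intro k1 k2 hk
  have hk1 : (k1 : ℕ) ≤ m := by omega
  have hk2 : (k2 : ℕ) ≤ m := by omega
  simp only [hp, if_pos hk1, if_pos hk2] at hk
  exact Fin.ext (hinj _ hk1 _ hk2 hk)

end TreeProofAux

namespace TreeProofAux

variable {V : Type*}

lemma pathLengths_nonneg (G : WGraph V) (u v : V) :
    ∀ L ∈ G.pathLengths u v, 0 ≤ L := by
  rintro L ⟨n, p, h0, hn, hs, rfl⟩
  apply Finset.sum_nonneg
  intro k hk
  exact (G.Rpos _ _ (hs k (Finset.mem_range.mp hk))).le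

lemma pathLengths_bddBelow (G : WGraph V) (u v : V) :
    BddBelow (G.pathLengths u v) :=
  ⟨0, pathLengths_nonneg G u v⟩

variable [MetricSpace V] {G : WGraph V}

lemma dist_le_mem (hmet : G.IsPathMetric) {u v : V} {L : ℝ}
    (hL : L ∈ G.pathLengths u v) : dist u v ≤ L := by
  rw [hmet u v]
  exact csInf_le (pathLengths_bddBelow G u v) hL

/-- Distance between two vertices visited by a strict walk is bounded by the
sum of the resistances of the intervening steps. -/
lemma dist_le_segment (hmet : G.IsPathMetric) {p : ℕ → V} {n : ℕ}
    (hs : ∀ k < n, G.Adj (p k) (p (k + 1))) {t1 t2 : ℕ}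
    (h12 : t1 ≤ t2) (h2n : t2 ≤ n) :
    dist (p t1) (p t2) ≤ ∑ k ∈ Finset.Ico t1 t2, G.R (p k) (p (k + 1)) := by
  have hmem : (∑ k ∈ Finset.Ico t1 t2, G.R (p k) (p (k + 1))) ∈
      G.pathLengths (p t1) (p t2) := by
    refine ⟨t2 - t1, fun k => p (t1 + k), by simp,
      by show p (t1 + (t2 - t1)) = p t2; rw [Nat.add_sub_cancel' h12], ?_, ?_⟩
    · intro k hk
      show G.Adj (p (t1 + k)) (p (t1 + (k + 1)))
      have : t1 + (k + 1) = t1 + k + 1 := by omega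
      rw [this]
      exact hs (t1 + k) (by omega)
    · rw [Finset.sum_Ico_eq_sum_range]
      apply Finset.sum_congr rfl
      intro k hk
      show G.R (p (t1 + k)) (p (t1 + k + 1)) = G.R (p (t1 + k)) (p (t1 + (k + 1)))
      have : t1 + k + 1 = t1 + (k + 1) := by omega
      rw [this]
  exact dist_le_mem hmet hmem

/-- Distinct steps of a simple walk carry distinct edges. -/
lemma edge_ne {σ : ℕ → V} {n : ℕ}
    (hinj : ∀ i ≤ n, ∀ j ≤ n, σ i = σ j → i = j) {i j : ℕ}
    (hi : i < n) (hj : j < n) (hij : i ≠ j) :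
    s(σ i, σ (i+1)) ≠ s(σ j, σ (j+1)) := by
  intro hcon
  rcases Sym2.eq_iff.mp hcon with ⟨h1, h2⟩ | ⟨h1, h2⟩
  · exact hij (hinj i (by omega) j (by omega) h1)
  · have e1 : i = j + 1 := hinj i (by omega) (j+1) (by omega) h1
    have e2 : i + 1 = j := hinj (i+1) (by omega) j (by omega) h2
    omega

/-- A segment of a simple strict walk avoiding the `j`-th edge gives a `Conn`. -/
lemma segment_conn {σ : ℕ → V} {n : ℕ}
    (hs : ∀ k < n, G.Adj (σ k) (σ (k + 1)))
    (hinj : ∀ i ≤ n, ∀ j ≤ n, σ i = σ j → i = j)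
    {t1 t2 j : ℕ} (h12 : t1 ≤ t2) (h2n : t2 ≤ n) (hj : j < n)
    (hout : j < t1 ∨ t2 ≤ j) :
    Conn G s(σ j, σ (j+1)) (σ t1) (σ t2) := by
  refine ⟨t2 - t1, fun k => σ (t1 + k), by simp,
    by show σ (t1 + (t2 - t1)) = σ t2; rw [Nat.add_sub_cancel' h12], ?_, ?_⟩
  · intro k hk
    right
    show G.Adj (σ (t1 + k)) (σ (t1 + (k + 1)))
    have : t1 + (k + 1) = t1 + k + 1 := by omega
    rw [this]
    exact hs (t1 + k) (by omega)
  · intro k hk hne hcon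
    replace hcon : s(σ (t1 + k), σ (t1 + (k + 1))) = s(σ j, σ (j+1)) := hcon
    have : t1 + (k + 1) = t1 + k + 1 := by omega
    rw [this] at hcon
    exact edge_ne hinj (by omega : t1 + k < n) hj (by omega) hcon

/-- In a tree, every strict walk between the endpoints of a simple strict walk
uses every edge of the latter. -/
lemma walk_uses
    (htree : ∀ (n : ℕ) (p : ℕ → V), 3 ≤ n →
      (∀ k < n, G.Adj (p k) (p (k + 1))) → p n = p 0 →
      ¬ Function.Injective (fun k : Fin n => p (k : ℕ)))
    {σ : ℕ → V} {n : ℕ}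
    (hs : ∀ k < n, G.Adj (σ k) (σ (k + 1)))
    (hinj : ∀ i ≤ n, ∀ j ≤ n, σ i = σ j → i = j)
    {τ : ℕ → V} {m : ℕ} (hτ0 : τ 0 = σ 0) (hτm : τ m = σ n)
    (hτs : ∀ k < m, G.Adj (τ k) (τ (k + 1)))
    {j : ℕ} (hj : j < n) :
    ∃ k < m, s(τ k, τ (k+1)) = s(σ j, σ (j+1)) := by
  by_contra hcon
  push_neg at hcon
  have hτconn : Conn G s(σ j, σ (j+1)) (σ 0) (σ n) := by
    refine ⟨m, τ, hτ0, hτm, ?_, ?_⟩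
    · intro k hk
      exact Or.inr (hτs k hk)
    · intro k hk _
      exact hcon k hk
  have hseg1 : Conn G s(σ j, σ (j+1)) (σ 0) (σ j) :=
    segment_conn hs hinj (Nat.zero_le j) (by omega) hj (Or.inr le_rfl)
  have hseg2 : Conn G s(σ j, σ (j+1)) (σ (j+1)) (σ n) :=
    segment_conn hs hinj (by omega) le_rfl hj (Or.inl (Nat.lt_succ_self j))
  exact no_conn htree (hs j hj)
    ((hseg1.symm.trans hτconn).trans hseg2.symm)

/-- In a tree, a simple strict walk realizes the minimal path length. -/
lemma simple_is_geodesic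
    (htree : ∀ (n : ℕ) (p : ℕ → V), 3 ≤ n →
      (∀ k < n, G.Adj (p k) (p (k + 1))) → p n = p 0 →
      ¬ Function.Injective (fun k : Fin n => p (k : ℕ)))
    {σ : ℕ → V} {n : ℕ}
    (hs : ∀ k < n, G.Adj (σ k) (σ (k + 1)))
    (hinj : ∀ i ≤ n, ∀ j ≤ n, σ i = σ j → i = j) :
    ∀ L ∈ G.pathLengths (σ 0) (σ n),
      (∑ k ∈ Finset.range n, G.R (σ k) (σ (k + 1))) ≤ L := by
  rintro L ⟨m, τ, hτ0, hτm, hτs, rfl⟩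
  classical
  have key : ∀ j, j < n → ∃ k, k < m ∧ s(τ k, τ (k+1)) = s(σ j, σ (j+1)) := by
    intro j hj
    obtain ⟨k, hk, he⟩ := walk_uses htree hs hinj hτ0 hτm hτs hj
    exact ⟨k, hk, he⟩
  set f : ℕ → ℕ := fun j => if h : j < n then (key j h).choose else 0 with hf
  have hf1 : ∀ j, j < n → f j < m := by
    intro j hj
    simp only [hf, dif_pos hj]
    exact (key j hj).choose_spec.1
  have hf2 : ∀ j, j < n → s(τ (f j), τ (f j + 1)) = s(σ j, σ (j+1)) := by
    intro j hj
    simp only [hf, dif_pos hj]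
    exact (key j hj).choose_spec.2
  have hfin : ∀ x ∈ Finset.range n, ∀ y ∈ Finset.range n, f x = f y → x = y := by
    intro x hx y hy hxy
    by_contra hne
    refine edge_ne hinj (Finset.mem_range.mp hx) (Finset.mem_range.mp hy) hne ?_
    rw [← hf2 x (Finset.mem_range.mp hx), hxy, hf2 y (Finset.mem_range.mp hy)]
  calc (∑ k ∈ Finset.range n, G.R (σ k) (σ (k + 1)))
      = ∑ j ∈ Finset.range n, G.R (τ (f j)) (τ (f j + 1)) := by
        apply Finset.sum_congr rfl
        intro j hj
        rcases Sym2.eq_iff.mp (hf2 j (Finset.mem_range.mp hj)) with ⟨h1, h2⟩ | ⟨h1, h2⟩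
        · rw [h1, h2]
        · rw [h1, h2, G.Rsymm]
    _ = ∑ k ∈ (Finset.range n).image f, G.R (τ k) (τ (k + 1)) :=
        (Finset.sum_image (f := fun k => G.R (τ k) (τ (k + 1))) hfin).symm
    _ ≤ ∑ k ∈ Finset.range m, G.R (τ k) (τ (k + 1)) := by
        apply Finset.sum_le_sum_of_subset_of_nonneg
        · intro k hk
          obtain ⟨j, hj, rfl⟩ := Finset.mem_image.mp hk
          exact Finset.mem_range.mpr (hf1 j (Finset.mem_range.mp hj))
        · intro k hk _
          exact (G.Rpos _ _ (hτs k (Finset.mem_range.mp hk))).le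

end TreeProofAux

namespace TreeProofAux

variable {V : Type*} [MetricSpace V] {G : WGraph V}

lemma sum_Ico_le_total {p : ℕ → V} {n : ℕ}
    (hs : ∀ k < n, G.Adj (p k) (p (k + 1))) {t1 t2 : ℕ} (h : t2 ≤ n) :
    ∑ k ∈ Finset.Ico t1 t2, G.R (p k) (p (k + 1)) ≤
      ∑ k ∈ Finset.range n, G.R (p k) (p (k + 1)) := by
  apply Finset.sum_le_sum_of_subset_of_nonneg
  · intro k hk
    rw [Finset.mem_Ico] at hk
    exact Finset.mem_range.mpr (by omega)
  · intro k hk _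
    exact (G.Rpos _ _ (hs k (Finset.mem_range.mp hk))).le

lemma dist_ge_segment (hmet : G.IsPathMetric) (hconn : G.Connected)
    (htree : ∀ (n : ℕ) (p : ℕ → V), 3 ≤ n →
      (∀ k < n, G.Adj (p k) (p (k + 1))) → p n = p 0 →
      ¬ Function.Injective (fun k : Fin n => p (k : ℕ)))
    {σ : ℕ → V} {n : ℕ}
    (hs : ∀ k < n, G.Adj (σ k) (σ (k + 1)))
    (hinj : ∀ i ≤ n, ∀ j ≤ n, σ i = σ j → i = j)
    {t1 t2 : ℕ} (h12 : t1 ≤ t2) (h2n : t2 ≤ n) :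
    (∑ k ∈ Finset.Ico t1 t2, G.R (σ k) (σ (k + 1))) ≤ dist (σ t1) (σ t2) := by
  set σ' : ℕ → V := fun k => σ (t1 + k) with hσ'
  have hs' : ∀ k < t2 - t1, G.Adj (σ' k) (σ' (k + 1)) := by
    intro k hk
    show G.Adj (σ (t1 + k)) (σ (t1 + (k + 1)))
    have : t1 + (k + 1) = t1 + k + 1 := by omega
    rw [this]
    exact hs (t1 + k) (by omega)
  have hinj' : ∀ i ≤ t2 - t1, ∀ j ≤ t2 - t1, σ' i = σ' j → i = j := by
    intro i hi j hj hij
    have := hinj (t1 + i) (by omega) (t1 + j) (by omega) hij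
    omega
  have hkey := simple_is_geodesic htree hs' hinj'
  have h0 : σ' 0 = σ t1 := by show σ (t1 + 0) = σ t1; rw [Nat.add_zero]
  have hn : σ' (t2 - t1) = σ t2 := by
    show σ (t1 + (t2 - t1)) = σ t2; rw [Nat.add_sub_cancel' h12]
  rw [h0, hn] at hkey
  rw [hmet]
  apply le_csInf (hconn _ _)
  intro L hL
  have := hkey L hL
  rw [Finset.sum_Ico_eq_sum_range]
  calc ∑ k ∈ Finset.range (t2 - t1), G.R (σ (t1 + k)) (σ (t1 + k + 1))
      = ∑ k ∈ Finset.range (t2 - t1), G.R (σ' k) (σ' (k + 1)) := by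
        apply Finset.sum_congr rfl
        intro k _
        show _ = G.R (σ (t1 + k)) (σ (t1 + (k + 1)))
        have : t1 + (k + 1) = t1 + k + 1 := by omega
        rw [this]
    _ ≤ L := this

end TreeProofAux

/-- the completion of a locally finite tree with positive edge
weights is weakly connected. -/
theorem tree_weaklyConnected {V : Type*} [MetricSpace V] [Countable V]
    (G : WGraph V) (hmet : G.IsPathMetric) (hconn : G.Connected)
    (htree : ∀ (n : ℕ) (p : ℕ → V), 3 ≤ n →
      (∀ k < n, G.Adj (p k) (p (k + 1))) → p n = p 0 →
      ¬ Function.Injective (fun k : Fin n => p (k : ℕ))) :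
    G.WeaklyConnected := by
  classical
  intro x y hxy
  have hD : (0:ℝ) < dist x y := dist_pos.mpr hxy
  set δ : ℝ := dist x y / 8 with hδdef
  have hδ : 0 < δ := by positivity
  obtain ⟨u, hu⟩ := (UniformSpace.Completion.denseRange_coe (α := V)).exists_dist_lt x hδ
  obtain ⟨v, hv⟩ := (UniformSpace.Completion.denseRange_coe (α := V)).exists_dist_lt y hδ
  have hLδ : 6 * δ < dist u v := by
    have h1 : dist x y ≤ dist x (↑u : Completion V) + dist (↑u : Completion V) (↑v : Completion V)
        + dist (↑v : Completion V) y := dist_triangle4 _ _ _ _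
    rw [UniformSpace.Completion.dist_eq] at h1
    have h2 : dist (↑v : Completion V) y = dist y (↑v : Completion V) := dist_comm _ _
    rw [h2] at h1
    have : dist x y = 8 * δ := by rw [hδdef]; ring
    linarith
  -- a simple strict walk from u to v
  have hconn_uv : TreeProofAux.Conn G s(u, u) u v := by
    obtain ⟨L, n, p, h0, hn, hs, _⟩ := hconn u v
    refine ⟨n, p, h0, hn, fun k hk => Or.inr (hs k hk), ?_⟩
    intro k hk hne hcon
    rcases Sym2.eq_iff.mp hcon with ⟨h1, h2⟩ | ⟨h1, h2⟩ <;> exact hne (h1.trans h2.symm)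
  obtain ⟨n, σ, hσ0, hσn, hσs, -, hσinj⟩ := TreeProofAux.exists_simple hconn_uv
  set S : ℕ → ℝ := fun t => ∑ k ∈ Finset.range t, G.R (σ k) (σ (k + 1)) with hS
  have hupper : dist u v ≤ S n := by
    have h1 := TreeProofAux.dist_le_segment hmet hσs (Nat.zero_le n) le_rfl
    rw [hσ0, hσn] at h1
    show dist u v ≤ ∑ k ∈ Finset.range n, G.R (σ k) (σ (k + 1))
    rw [Finset.range_eq_Ico]
    exact h1
  have hlower : S n ≤ dist u v := by
    have h1 := TreeProofAux.dist_ge_segment hmet hconn htree hσs hσinj (Nat.zero_le n) le_rfl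
    rw [hσ0, hσn] at h1
    show (∑ k ∈ Finset.range n, G.R (σ k) (σ (k + 1))) ≤ dist u v
    rw [Finset.range_eq_Ico]
    exact h1
  have hSn : S n = dist u v := le_antisymm hlower hupper
  have hn0 : 0 < n := by
    rcases Nat.eq_zero_or_pos n with h | h
    · exfalso
      have : u = v := by rw [← hσ0, ← hσn, h]
      rw [this] at hLδ
      simp at hLδ
      linarith
    · exact h
  -- choose the middle edge
  have hPex : ∃ t, dist u v / 2 < S (t + 1) := by
    refine ⟨n - 1, ?_⟩
    have : n - 1 + 1 = n := by omega
    rw [this, hSn]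
    linarith
  set i := Nat.find hPex with hidef
  have hi1 : dist u v / 2 < S (i + 1) := Nat.find_spec hPex
  have hi2 : S i ≤ dist u v / 2 := by
    rcases Nat.eq_zero_or_pos i with h | h
    · rw [h]; simp [hS]; linarith
    · have hlt : i - 1 < i := by omega
      have := Nat.find_min hPex (m := i - 1) hlt
      push_neg at this
      have heq : i - 1 + 1 = i := by omega
      rwa [heq] at this
  have hin : i < n := by
    have : i ≤ n - 1 := Nat.find_le (by
      have h : n - 1 + 1 = n := by omega
      rw [h, hSn]; linarith)
    omega
  -- distance estimates for the two endpoints of the middle edge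
  have hstepsum : ∀ t1 t2, t1 ≤ t2 → t2 ≤ n →
      (∑ k ∈ Finset.Ico t1 t2, G.R (σ k) (σ (k + 1))) ≤ dist (σ t1) (σ t2) :=
    fun t1 t2 h12 h2n => TreeProofAux.dist_ge_segment hmet hconn htree hσs hσinj h12 h2n
  have hA : 3 * δ < dist u (σ (i + 1)) := by
    have h1 := hstepsum 0 (i + 1) (Nat.zero_le _) (by omega)
    rw [hσ0, ← Finset.range_eq_Ico] at h1
    have : S (i + 1) ≤ dist u (σ (i + 1)) := h1
    linarith
  have hB : 3 * δ < dist (σ i) v := by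
    have h1 := hstepsum i n (by omega) le_rfl
    rw [hσn] at h1
    have h2 : (∑ k ∈ Finset.Ico i n, G.R (σ k) (σ (k + 1))) = S n - S i := by
      rw [hS]
      simp only
      rw [eq_sub_iff_add_eq, Finset.sum_Ico_eq_sub _ (by omega : i ≤ n)]
      ring
    rw [h2, hSn] at h1
    linarith
  set e : Sym2 V := s(σ i, σ (i + 1)) with hedef
  have hadj : G.Adj (σ i) (σ (i + 1)) := hσs i hin
  refine ⟨{e}, Set.finite_singleton e, ?_, ?_⟩
  · intro f hf
    rw [Set.mem_singleton_iff] at hf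
    exact ⟨σ i, σ (i + 1), hadj, hf⟩
  · intro γ
    by_contra hno
    push_neg at hno
    have hnouse : ¬ γ.uses e := hno e rfl
    -- pick points of the path close to x and y
    obtain ⟨N1, hN1⟩ := Metric.tendsto_atTop.mp γ.tendsto_left δ hδ
    obtain ⟨N2, hN2⟩ := Metric.tendsto_atTop.mp γ.tendsto_right δ hδ
    set N := max N1 N2 with hN
    set a := γ.p (-(N : ℤ)) with ha
    set b := γ.p (N : ℤ) with hb
    have hax : dist ((a : V) : Completion V) x < δ := hN1 N (le_max_left _ _)
    have hby : dist ((b : V) : Completion V) y < δ := hN2 N (le_max_right _ _)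
    -- the path segment gives a lazy walk from a to b avoiding e
    have hconn_ab : TreeProofAux.Conn G e a b := by
      refine ⟨2 * N, fun k => γ.p ((min k (2 * N) : ℕ) - (N : ℤ)), ?_, ?_, ?_, ?_⟩
      · show γ.p ((min 0 (2 * N) : ℕ) - (N : ℤ)) = a
        rw [min_eq_left (Nat.zero_le _)]
        simp [ha]
      · show γ.p ((min (2 * N) (2 * N) : ℕ) - (N : ℤ)) = b
        rw [min_self, hb]
        congr 1
        push_cast
        ring
      · intro k hk
        show γ.p ((min k (2 * N) : ℕ) - (N : ℤ)) = γ.p ((min (k + 1) (2 * N) : ℕ) - (N : ℤ)) ∨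
          G.Adj (γ.p ((min k (2 * N) : ℕ) - (N : ℤ))) (γ.p ((min (k + 1) (2 * N) : ℕ) - (N : ℤ)))
        rw [min_eq_left (by omega : k ≤ 2 * N), min_eq_left (by omega : k + 1 ≤ 2 * N)]
        have harith : ((k + 1 : ℕ) : ℤ) - (N : ℤ) = ((k : ℕ) : ℤ) - (N : ℤ) + 1 := by
          push_cast; ring
        rw [harith]
        exact γ.step _
      · intro k hk hne hcon
        replace hne : γ.p (((min k (2 * N) : ℕ) : ℤ) - (N : ℤ)) ≠
            γ.p (((min (k + 1) (2 * N) : ℕ) : ℤ) - (N : ℤ)) := hne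
        replace hcon : s(γ.p (((min k (2 * N) : ℕ) : ℤ) - (N : ℤ)),
            γ.p (((min (k + 1) (2 * N) : ℕ) : ℤ) - (N : ℤ))) = e := hcon
        rw [min_eq_left (by omega : k ≤ 2 * N),
          min_eq_left (by omega : k + 1 ≤ 2 * N)] at hne hcon
        have harith : ((k + 1 : ℕ) : ℤ) - (N : ℤ) = ((k : ℕ) : ℤ) - (N : ℤ) + 1 := by
          push_cast; ring
        rw [harith] at hne hcon
        exact hnouse ⟨((k : ℕ) : ℤ) - (N : ℤ), hne, hcon.symm⟩
    -- a short walk from u to a avoiding e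
    have hconn_ua : TreeProofAux.Conn G e u a := by
      have hdua : dist u a < 2 * δ := by
        rw [← UniformSpace.Completion.dist_eq]
        calc dist ((u : V) : Completion V) ((a : V) : Completion V)
            ≤ dist ((u : V) : Completion V) x + dist x ((a : V) : Completion V) :=
              dist_triangle _ _ _
          _ < δ + δ := by
              rw [dist_comm (α := Completion V) ((u : V) : Completion V) x]
              rw [dist_comm (α := Completion V) x ((a : V) : Completion V)] 
              exact add_lt_add hu hax
          _ = 2 * δ := by ring
      obtain ⟨L1, hL1mem, hL1⟩ := exists_lt_of_csInf_lt (hconn u a) (by rw [← hmet]; exact hdua)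
      obtain ⟨n1, p1, h10, h1n, h1s, rfl⟩ := hL1mem
      refine ⟨n1, p1, h10, h1n, fun k hk => Or.inr (h1s k hk), ?_⟩
      intro k hk hne hcon
      have hvisit : ∃ t ≤ n1, p1 t = σ (i + 1) := by
        rcases Sym2.eq_iff.mp hcon with ⟨h1, h2⟩ | ⟨h1, h2⟩
        · exact ⟨k + 1, by omega, h2⟩
        · exact ⟨k, by omega, h1⟩
      obtain ⟨t, htn, hteq⟩ := hvisit
      have hd1 : dist (p1 0) (p1 t) ≤ ∑ k ∈ Finset.Ico 0 t, G.R (p1 k) (p1 (k + 1)) :=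
        TreeProofAux.dist_le_segment hmet h1s (Nat.zero_le t) htn
      have hd2 := TreeProofAux.sum_Ico_le_total h1s (t1 := 0) (t2 := t) htn
      rw [h10, hteq] at hd1
      linarith
    -- a short walk from b to v avoiding e
    have hconn_bv : TreeProofAux.Conn G e b v := by
      have hdbv : dist b v < 2 * δ := by
        rw [← UniformSpace.Completion.dist_eq]
        calc dist ((b : V) : Completion V) ((v : V) : Completion V)
            ≤ dist ((b : V) : Completion V) y + dist y ((v : V) : Completion V) :=
              dist_triangle _ _ _
          _ < δ + δ := add_lt_add hby hv
          _ = 2 * δ := by ring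
      obtain ⟨L2, hL2mem, hL2⟩ := exists_lt_of_csInf_lt (hconn b v) (by rw [← hmet]; exact hdbv)
      obtain ⟨n2, p2, h20, h2n, h2s, rfl⟩ := hL2mem
      refine ⟨n2, p2, h20, h2n, fun k hk => Or.inr (h2s k hk), ?_⟩
      intro k hk hne hcon
      have hvisit : ∃ t ≤ n2, p2 t = σ i := by
        rcases Sym2.eq_iff.mp hcon with ⟨h1, h2⟩ | ⟨h1, h2⟩
        · exact ⟨k, by omega, h1⟩
        · exact ⟨k + 1, by omega, h2⟩
      obtain ⟨t, htn, hteq⟩ := hvisit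
      have hd1 : dist (p2 t) (p2 n2) ≤ ∑ k ∈ Finset.Ico t n2, G.R (p2 k) (p2 (k + 1)) :=
        TreeProofAux.dist_le_segment hmet h2s htn le_rfl
      have hd2 := TreeProofAux.sum_Ico_le_total h2s (t1 := t) (t2 := n2) le_rfl
      rw [hteq, h2n] at hd1
      linarith
    -- segments of σ
    have hconn_usi : TreeProofAux.Conn G e u (σ i) := by
      have := TreeProofAux.segment_conn hσs hσinj (Nat.zero_le i) (by omega : i ≤ n) hin
        (Or.inr le_rfl)
      rwa [hσ0] at this
    have hconn_si1v : TreeProofAux.Conn G e (σ (i + 1)) v := by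
      have := TreeProofAux.segment_conn hσs hσinj (by omega : i + 1 ≤ n) le_rfl hin
        (Or.inl (Nat.lt_succ_self i))
      rwa [hσn] at this
    -- assemble the forbidden connection
    have : TreeProofAux.Conn G e (σ i) (σ (i + 1)) :=
      (((hconn_usi.symm.trans hconn_ua).trans hconn_ab).trans hconn_bv).trans hconn_si1v.symm
    exact TreeProofAux.no_conn htree hadj this
end
end

section
/- Let G₀ be an edge-weighted locally finite graph with weakly connected completion. Enlarge G₀ to G₁ on the same vertex set by adding a sequence of edges e_n with lengths R_n → 0, and suppose there is a constant C > 0 such that d₁(u,v) ≤ d₀(u,v) ≤ C·d₁(u,v) for all vertices u,v, where d₀ and d₁ are the path metrics of G₀ and G₁. Then the completion of G₁ is weakly connected. -/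
open UniformSpace Filter Topology
open scoped ENNReal

noncomputable section

/-!
Let `γ` be a path of `G₁` joining `x ≠ y`, and let `W₀` be a finite set of edges of `G₀` that every
`G₀`-path from `x` to `y` meets. The edges of `W₀` have length at least some `ρ > 0`, and only
finitely many added edges have `(C + 1) R ≥ ρ`; put those into `W`, together with `W₀`. If `γ`
avoided `W`, each added edge `uv` of `γ` would satisfy `d₀(u, v) ≤ C d₁(u, v) < (C + 1) R(u, v) < ρ`,
so it could be replaced by a `G₀`-walk of length `< ρ`, which uses no edge of `W₀` and stays within
`(C + 1) d₁(u, v)` of `u`. Since consecutive vertices of `γ` get close at both ends, the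
concatenation of these walks is a `G₀`-path from `x` to `y` avoiding `W₀`, a contradiction.
-/

theorem tendsto_comp_natCast_iff {β : Type*} {f : ℤ → β} {l : Filter β} :
    Tendsto (fun n : ℕ => f n) atTop l ↔ Tendsto f atTop l := by
  rw [← Nat.map_cast_int_atTop, tendsto_map'_iff]
  rfl

theorem tendsto_comp_neg_natCast_iff {β : Type*} {f : ℤ → β} {l : Filter β} :
    Tendsto (fun n : ℕ => f (-n)) atTop l ↔ Tendsto f atBot l := by
  rw [← map_neg_atTop, ← Nat.map_cast_int_atTop, map_map, tendsto_map'_iff]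
  rfl

theorem finite_setOf_le_of_tendsto_zero {f : ℕ → ℝ} (hf : Tendsto f atTop (𝓝 0)) {ρ : ℝ}
    (hρ : 0 < ρ) : {n | ρ ≤ f n}.Finite := by
  simpa [← Nat.cofinite_eq_atTop, eventually_cofinite] using hf.eventually (gt_mem_nhds hρ)

section BlockConcat

/-- Position at which block `k` starts when blocks of lengths `m k` are laid end to end along `ℤ`,
block `0` starting at `0`. -/
def blockStart (m : ℤ → ℕ) (k : ℤ) : ℤ :=
  (∑ i ∈ Finset.range k.toNat, (m i : ℤ)) - ∑ i ∈ Finset.range (-k).toNat, (m (-(i : ℤ) - 1) : ℤ)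

theorem blockStart_zero (m : ℤ → ℕ) : blockStart m 0 = 0 := by simp [blockStart]

theorem blockStart_succ (m : ℤ → ℕ) (k : ℤ) : blockStart m (k + 1) = blockStart m k + m k := by
  unfold blockStart
  rcases le_or_gt 0 k with hk | hk
  · rw [show (k + 1).toNat = k.toNat + 1 by omega, show (-(k + 1)).toNat = 0 by omega,
      show (-k).toNat = 0 by omega, Finset.sum_range_succ, Int.toNat_of_nonneg hk]
    ring
  · rw [show (k + 1).toNat = 0 by omega, show k.toNat = 0 by omega,
      show (-k).toNat = (-(k + 1)).toNat + 1 by omega, Finset.sum_range_succ,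
      show -((-(k + 1)).toNat : ℤ) - 1 = k by omega]
    ring

variable {m : ℤ → ℕ} (hm : ∀ k, 0 < m k)
include hm

theorem blockStart_strictMono : StrictMono (blockStart m) :=
  strictMono_int_of_lt_succ fun k => by rw [blockStart_succ]; have := hm k; omega

theorem le_blockStart {k : ℤ} (hk : 0 ≤ k) : k ≤ blockStart m k := by
  induction k, hk using Int.leInduction with
  | base => rw [blockStart_zero]
  | succ k _ ih => have := blockStart_strictMono hm (lt_add_one k); omega

theorem blockStart_le {k : ℤ} (hk : k ≤ 0) : blockStart m k ≤ k := by
  induction k, hk using Int.leInductionDown with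
  | base => rw [blockStart_zero]
  | pred k _ ih => have := blockStart_strictMono hm (sub_one_lt k); omega

theorem exists_blockStart_le_lt (j : ℤ) :
    ∃ k, blockStart m k ≤ j ∧ j < blockStart m (k + 1) := by
  obtain ⟨k, hk, hmax⟩ := Int.exists_greatest_of_bdd (P := fun k => blockStart m k ≤ j)
    ⟨max j 0, fun z hz => by
      by_contra! h
      have := le_blockStart hm (k := z) (by omega)
      omega⟩
    ⟨min j 0, (blockStart_le hm (min_le_right j 0)).trans (min_le_left j 0)⟩
  exact ⟨k, hk, not_le.1 fun h => (hmax (k + 1) h).not_gt (lt_add_one k)⟩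

omit hm

/-- Concatenation along `ℤ` of finite blocks `blk k` joining `P k` to `P (k + 1)`: `K j` is the
block that position `j` of the concatenation `q` belongs to. -/
theorem exists_concat_blocks {α : Type*} (P : ℤ → α) (blk : ℤ → ℕ → α) (n : ℤ → ℕ)
    (h_start : ∀ k, blk k 0 = P k) (h_finish : ∀ k, ∀ i ≥ n k, blk k i = P (k + 1)) :
    ∃ (q : ℤ → α) (K : ℤ → ℤ), Tendsto K atTop atTop ∧ Tendsto K atBot atBot ∧
      ∀ j, ∃ i, q j = blk (K j) i ∧ q (j + 1) = blk (K j) (i + 1) := by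
  -- blocks of length `n k + 1`, so that every block is nonempty
  obtain ⟨σ, hσ, hσ_succ, hK⟩ : ∃ σ : ℤ → ℤ, StrictMono σ ∧ (∀ k, σ (k + 1) = σ k + (n k + 1)) ∧
      ∀ j, ∃ k, σ k ≤ j ∧ j < σ (k + 1) :=
    have hpos : ∀ k, 0 < n k + 1 := fun k => Nat.succ_pos _
    ⟨blockStart (fun k => n k + 1), blockStart_strictMono hpos,
      fun k => by rw [blockStart_succ]; push_cast; ring, exists_blockStart_le_lt hpos⟩
  choose K hK using hK
  have le_K : ∀ {N j}, σ N ≤ j → N ≤ K j := fun {N j} h => by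
    by_contra! hlt
    exact (hK j).2.not_ge ((hσ.monotone (Int.add_one_le_of_lt hlt)).trans h)
  have K_lt : ∀ {N j}, j < σ N → K j < N := fun {N j} h => hσ.lt_iff_lt.1 ((hK j).1.trans_lt h)
  refine ⟨fun j => blk (K j) (j - σ (K j)).toNat, K,
    tendsto_atTop_atTop.2 fun N => ⟨σ N, fun j => le_K⟩,
    tendsto_atBot_atBot.2 fun N => ⟨σ N - 1, fun j hj => (K_lt (by omega)).le⟩,
    fun j => ⟨_, rfl, ?_⟩⟩
  obtain ⟨h_le, h_lt⟩ := hK j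
  rcases (show j + 1 < σ (K j + 1) ∨ j + 1 = σ (K j + 1) by omega) with hlt | heq
  · have hK_succ : K (j + 1) = K j :=
      le_antisymm (Int.lt_add_one_iff.1 (K_lt hlt)) (le_K (by omega))
    simp only [hK_succ]
    congr 1
    omega
  · have hK_succ : K (j + 1) = K j + 1 :=
      le_antisymm (Int.lt_add_one_iff.1 (K_lt (by rw [hσ_succ]; omega))) (le_K heq.ge)
    simp only [hK_succ, ← heq, sub_self, Int.toNat_zero, h_start]
    exact (h_finish _ _ (by have := hσ_succ (K j); omega)).symm

end BlockConcat

section CompletionLimits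

variable {V : Type*} [MetricSpace V]

theorem tendsto_dist_succ {l : Filter ℤ} (hl : Tendsto (· + 1) l l) {p : ℤ → V}
    {z : Completion V} (hp : Tendsto (fun k => (p k : Completion V)) l (𝓝 z)) :
    Tendsto (fun k => dist (p k) (p (k + 1))) l (𝓝 0) := by
  simpa [Completion.dist_eq] using hp.dist (hp.comp hl)

theorem tendsto_coe_of_dist_le {ι κ : Type*} {l : Filter ι} {l' : Filter κ} {q : ι → V}
    {P : κ → V} {K : ι → κ} {b : κ → ℝ} {z : Completion V}
    (hP : Tendsto (fun k => (P k : Completion V)) l' (𝓝 z)) (hK : Tendsto K l l')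
    (hb : Tendsto b l' (𝓝 0)) (hq : ∀ j, dist (q j) (P (K j)) ≤ b (K j)) :
    Tendsto (fun j => (q j : Completion V)) l (𝓝 z) :=
  (hP.comp hK).congr_dist <| squeeze_zero (fun _ => dist_nonneg)
    (fun j => by
      rw [Function.comp_apply, Completion.dist_eq, dist_comm]
      exact hq j) (hb.comp hK)

end CompletionLimits

namespace WGraph

variable {V : Type*} {G : WGraph V}

theorem ne_of_adj {a b : V} (h : G.Adj a b) : a ≠ b := fun hab => G.loopless a (hab ▸ h)

theorem mk_mem_edgeSet {a b : V} : s(a, b) ∈ G.edgeSet ↔ G.Adj a b := by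
  refine ⟨fun ⟨u, v, huv, he⟩ => ?_, fun h => ⟨a, b, h, rfl⟩⟩
  rcases Sym2.eq_iff.1 he with ⟨rfl, rfl⟩ | ⟨rfl, rfl⟩
  exacts [huv, G.symm _ _ huv]

theorem pathLengths_nonneg {u v : V} {L : ℝ} (hL : L ∈ G.pathLengths u v) : 0 ≤ L := by
  obtain ⟨n, p, -, -, hadj, rfl⟩ := hL
  exact Finset.sum_nonneg fun k hk => (G.Rpos _ _ (hadj k (Finset.mem_range.1 hk))).le

theorem bddBelow_pathLengths (u v : V) : BddBelow (G.pathLengths u v) :=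
  ⟨0, fun _ => pathLengths_nonneg⟩

theorem R_mem_pathLengths {u v : V} (h : G.Adj u v) : G.R u v ∈ G.pathLengths u v :=
  ⟨1, fun i => if i = 0 then u else v, rfl, rfl, by simpa using h, by simp⟩

theorem IsPathMetric.dist_le_R [MetricSpace V] (hG : G.IsPathMetric) {u v : V} (h : G.Adj u v) :
    dist u v ≤ G.R u v :=
  (hG u v).trans_le (csInf_le (bddBelow_pathLengths u v) (R_mem_pathLengths h))

theorem exists_pos_le_R {W : Set (Sym2 V)} (hW : W.Finite) (hWG : W ⊆ G.edgeSet) :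
    ∃ ρ > 0, ∀ a b, s(a, b) ∈ W → ρ ≤ G.R a b := by
  have hpos : ∀ ed ∈ W, 0 < Sym2.lift ⟨G.R, G.Rsymm⟩ ed := fun ed hed => by
    obtain ⟨a, b, hab, rfl⟩ := hWG hed
    exact G.Rpos a b hab
  obtain ⟨ρ, hρW, hρ⟩ := ((hW.eventually_all.2 fun ed hed => eventually_nhdsWithin_of_eventually_nhds
    (eventually_le_nhds (hpos ed hed))).and (self_mem_nhdsWithin (s := Set.Ioi (0 : ℝ)))).exists
  exact ⟨ρ, hρ, fun a b h => hρW _ h⟩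

variable (G) in
def StepAvoiding (W : Set (Sym2 V)) (a b : V) : Prop :=
  a = b ∨ G.Adj a b ∧ s(a, b) ∉ W

variable (G) in
structure IsDetour [MetricSpace V] (W : Set (Sym2 V)) (u v : V) (r : ℝ) (n : ℕ) (p : ℕ → V) :
    Prop where
  start : p 0 = u
  finish : ∀ i ≥ n, p i = v
  step : ∀ i, G.StepAvoiding W (p i) (p (i + 1))
  dist_le : ∀ i, dist (p i) u ≤ r

variable [MetricSpace V] {W : Set (Sym2 V)}

theorem isDetour_hop {u v : V} {r : ℝ} (h : G.StepAvoiding W u v) (hr : dist u v ≤ r) :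
    G.IsDetour W u v r 1 fun i => if i = 0 then u else v where
  start := if_pos rfl
  finish i hi := if_neg (by omega)
  step i := by
    rcases Nat.eq_zero_or_pos i with rfl | hi
    · simpa using h
    · exact Or.inl (by simp [hi.ne'])
  dist_le i := by
    split_ifs
    · simpa using dist_nonneg.trans hr
    · rwa [dist_comm]

theorem exists_isDetour_of_sInf_lt (hconn : G.Connected)
    (hdist : ∀ u v, dist u v ≤ sInf (G.pathLengths u v)) {r : ℝ}
    (hW : ∀ a b, s(a, b) ∈ W → r ≤ G.R a b) {u v : V} (hr : sInf (G.pathLengths u v) < r) :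
    ∃ n p, G.IsDetour W u v r n p := by
  obtain ⟨_, ⟨n, p, hp0, hpn, hadj, rfl⟩, hLr⟩ := exists_lt_of_csInf_lt (hconn u v) hr
  have hR_nonneg : ∀ k ∈ Finset.range n, 0 ≤ G.R (p k) (p (k + 1)) :=
    fun k hk => (G.Rpos _ _ (hadj k (Finset.mem_range.1 hk))).le
  have hprefix : ∀ i ≤ n, dist u (p i) ≤ ∑ k ∈ Finset.range n, G.R (p k) (p (k + 1)) :=
    fun i hi => (hdist u (p i)).trans <| (csInf_le (bddBelow_pathLengths u (p i))
      ⟨i, p, hp0, rfl, fun k hk => hadj k (by omega), rfl⟩).trans <|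
      Finset.sum_le_sum_of_subset_of_nonneg (Finset.range_subset_range.2 hi)
        fun k hk _ => hR_nonneg k hk
  refine ⟨n, fun i => p (min i n), ⟨by simpa, fun i hi => by simpa [hi] using hpn, fun i => ?_,
    fun i => by rw [dist_comm]; exact (hprefix _ (min_le_right i n)).trans hLr.le⟩⟩
  rcases lt_or_ge i n with hi | hi
  · simp only [min_eq_left hi.le, min_eq_left (Nat.succ_le_of_lt hi)]
    -- an edge of the walk is no longer than the walk, hence shorter than every edge of `W`
    exact Or.inr ⟨hadj i hi, fun hmem => ((hW _ _ hmem).trans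
      (Finset.single_le_sum hR_nonneg (Finset.mem_range.2 hi))).not_gt hLr⟩
  · simp [min_eq_right hi, min_eq_right (hi.trans (Nat.le_succ i)), StepAvoiding]

theorem exists_isDetour_of_step {G1 : WGraph V} (hconn : G.Connected) (hmet : G1.IsPathMetric)
    {C : ℝ} (hC : 0 ≤ C)
    (hcompare : ∀ u v : V, dist u v ≤ sInf (G.pathLengths u v) ∧
      sInf (G.pathLengths u v) ≤ C * dist u v)
    {ρ : ℝ} (hρ : ∀ a b, s(a, b) ∈ W → ρ ≤ G.R a b) {u v : V}
    (h : G.StepAvoiding W u v ∨ G1.Adj u v ∧ (C + 1) * G1.R u v < ρ) :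
    ∃ n p, G.IsDetour W u v ((C + 1) * dist u v) n p := by
  rcases h with h | ⟨hadj, hshort⟩
  · exact ⟨1, _, isDetour_hop h (le_mul_of_one_le_left dist_nonneg (by linarith))⟩
  have hd : 0 < dist u v := dist_pos.2 (ne_of_adj hadj)
  have hr : (C + 1) * dist u v ≤ ρ :=
    (mul_le_mul_of_nonneg_left (hmet.dist_le_R hadj) (by linarith)).trans hshort.le
  refine exists_isDetour_of_sInf_lt hconn (fun u v => (hcompare u v).1)
    (fun a b hab => hr.trans (hρ a b hab)) ?_
  calc sInf (G.pathLengths u v) ≤ C * dist u v := (hcompare u v).2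
    _ < (C + 1) * dist u v := by linarith

namespace CPath

variable {x y : Completion V}

theorem tendsto_atTop (γ : G.CPath x y) :
    Tendsto (fun k => (γ.p k : Completion V)) atTop (𝓝 y) :=
  tendsto_comp_natCast_iff.1 γ.tendsto_right

theorem tendsto_atBot (γ : G.CPath x y) :
    Tendsto (fun k => (γ.p k : Completion V)) atBot (𝓝 x) :=
  tendsto_comp_neg_natCast_iff.1 γ.tendsto_left

def ofTendsto (p : ℤ → V) (step : ∀ k, p k = p (k + 1) ∨ G.Adj (p k) (p (k + 1)))
    (hx : Tendsto (fun k => (p k : Completion V)) atBot (𝓝 x))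
    (hy : Tendsto (fun k => (p k : Completion V)) atTop (𝓝 y)) : G.CPath x y where
  p := p
  step := step
  tendsto_left := tendsto_comp_neg_natCast_iff.2 hx
  tendsto_right := tendsto_comp_natCast_iff.2 hy

theorem exists_of_isDetour {G' : WGraph V} (γ : G'.CPath x y) {c : ℝ}
    (h : ∀ k, ∃ n p, G.IsDetour W (γ.p k) (γ.p (k + 1)) (c * dist (γ.p k) (γ.p (k + 1))) n p) :
    ∃ γ' : G.CPath x y, ∀ j, G.StepAvoiding W (γ'.p j) (γ'.p (j + 1)) := by
  choose n blk hblk using h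
  obtain ⟨q, K, hK_top, hK_bot, hq⟩ := exists_concat_blocks γ.p blk n
    (fun k => (hblk k).start) (fun k => (hblk k).finish)
  have hstep : ∀ j, G.StepAvoiding W (q j) (q (j + 1)) := fun j => by
    obtain ⟨i, h1, h2⟩ := hq j
    rw [h1, h2]
    exact (hblk _).step i
  have hclose : ∀ j, dist (q j) (γ.p (K j)) ≤ c * dist (γ.p (K j)) (γ.p (K j + 1)) := fun j => by
    obtain ⟨i, h1, -⟩ := hq j
    rw [h1]
    exact (hblk _).dist_le i
  have hbot := γ.tendsto_atBot
  have htop := γ.tendsto_atTop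
  have hgap_bot : Tendsto (fun k => c * dist (γ.p k) (γ.p (k + 1))) atBot (𝓝 0) := by
    simpa using (tendsto_dist_succ (tendsto_atBot_add_const_right _ 1 tendsto_id) hbot).const_mul c
  have hgap_top : Tendsto (fun k => c * dist (γ.p k) (γ.p (k + 1))) atTop (𝓝 0) := by
    simpa using (tendsto_dist_succ (tendsto_atTop_add_const_right _ 1 tendsto_id) htop).const_mul c
  exact ⟨ofTendsto q (fun j => (hstep j).imp id And.left)
    (tendsto_coe_of_dist_le hbot hK_bot hgap_bot hclose)
    (tendsto_coe_of_dist_le htop hK_top hgap_top hclose), hstep⟩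

end CPath

end WGraph

theorem weaklyConnected_of_addEdges_general {V : Type*} [MetricSpace V]
    (G0 G1 : WGraph V)
    (hsub : ∀ u v, G0.Adj u v → G1.Adj u v)
    (e : ℕ → Sym2 V)
    (henum : G1.edgeSet \ G0.edgeSet ⊆ Set.range e)
    (hmem : ∀ n, e n ∈ G1.edgeSet)
    (hlen : Filter.Tendsto (fun n => Sym2.lift ⟨G1.R, G1.Rsymm⟩ (e n)) Filter.atTop (nhds 0))
    (hmet : G1.IsPathMetric) (hconn0 : G0.Connected)
    (C : ℝ) (hC : 0 < C)
    (hcompare : ∀ u v : V, dist u v ≤ sInf (G0.pathLengths u v) ∧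
      sInf (G0.pathLengths u v) ≤ C * dist u v)
    (h0 : G0.WeaklyConnected) :
    G1.WeaklyConnected := by
  intro x y hxy
  obtain ⟨W0, hW0_fin, hW0_sub, hW0⟩ := h0 x y hxy
  obtain ⟨ρ, hρ, hρW0⟩ := WGraph.exists_pos_le_R hW0_fin hW0_sub
  set S := {n | ρ ≤ (C + 1) * Sym2.lift ⟨G1.R, G1.Rsymm⟩ (e n)}
  have hS : S.Finite := finite_setOf_le_of_tendsto_zero (by simpa using hlen.const_mul (C + 1)) hρ
  refine ⟨W0 ∪ e '' S, hW0_fin.union (hS.image e), Set.union_subset (fun ed hed => ?_) ?_,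
    fun γ => ?_⟩
  · obtain ⟨u, v, huv, rfl⟩ := hW0_sub hed
    exact WGraph.mk_mem_edgeSet.2 (hsub u v huv)
  · rintro _ ⟨n, -, rfl⟩
    exact hmem n
  by_contra! hγ
  have hstep (k : ℤ) : G0.StepAvoiding W0 (γ.p k) (γ.p (k + 1)) ∨
      G1.Adj (γ.p k) (γ.p (k + 1)) ∧ (C + 1) * G1.R (γ.p k) (γ.p (k + 1)) < ρ := by
    rcases γ.step k with heq | hadj
    · exact Or.inl (Or.inl heq)
    have hused : γ.uses s(γ.p k, γ.p (k + 1)) := ⟨k, WGraph.ne_of_adj hadj, rfl⟩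
    by_cases hadj0 : G0.Adj (γ.p k) (γ.p (k + 1))
    · exact Or.inl (Or.inr ⟨hadj0, fun h => hγ _ (Or.inl h) hused⟩)
    obtain ⟨m, hm⟩ := henum ⟨WGraph.mk_mem_edgeSet.2 hadj, mt WGraph.mk_mem_edgeSet.1 hadj0⟩
    exact Or.inr ⟨hadj, not_le.1 fun hle => hγ _ (Or.inr ⟨m, by simpa [S, hm] using hle, hm⟩) hused⟩
  obtain ⟨γ0, hγ0⟩ := γ.exists_of_isDetour fun k =>
    WGraph.exists_isDetour_of_step hconn0 hmet hC.le hcompare hρW0 (hstep k)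
  obtain ⟨ed, hed, k, hne, rfl⟩ := hW0 γ0
  exact ((hγ0 k).resolve_left hne).2 hed

/-- adding a sequence of edges with lengths tending to `0`, in a
way which changes the path metric only up to a bi-Lipschitz constant, preserves
weak connectivity of the completion. -/
theorem weaklyConnected_of_addEdges {V : Type*} [MetricSpace V] [Countable V]
    (G0 G1 : WGraph V)
    (hsub : ∀ u v, G0.Adj u v → G1.Adj u v)
    (hRsame : ∀ u v, G0.Adj u v → G0.R u v = G1.R u v)
    (e : ℕ → Sym2 V)
    (henum : G1.edgeSet \ G0.edgeSet ⊆ Set.range e)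
    (hmem : ∀ n, e n ∈ G1.edgeSet)
    (hlen : Filter.Tendsto (fun n => Sym2.lift ⟨G1.R, G1.Rsymm⟩ (e n)) Filter.atTop (nhds 0))
    (hmet : G1.IsPathMetric) (hconn0 : G0.Connected)
    (C : ℝ) (hC : 0 < C)
    (hcompare : ∀ u v : V, dist u v ≤ sInf (G0.pathLengths u v) ∧
      sInf (G0.pathLengths u v) ≤ C * dist u v)
    (h0 : G0.WeaklyConnected) :
    G1.WeaklyConnected :=
  weaklyConnected_of_addEdges_general G0 G1 hsub e henum hmem hlen hmet hconn0 C hC hcompare h0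
end
end

section
/- Suppose the completion Ḡ of an edge-weighted graph G is weakly connected. If U and V are disjoint compact subsets of Ḡ, then there is a finite set W of edges of G such that every path from a point of U to a point of V contains an edge of W. -/
open UniformSpace Filter Topology
open scoped ENNReal

noncomputable section

/-
If `W` separates `x` from `y` and `r > 0` bounds the resistances of the edges of `W` from below,
then every path of length `< r` avoids `W`. Hence in `G` with the edges of `W` deleted, vertices at
distance `< ε ≤ r` are still joined inside an `ε`-ball, and any vertex within `r / 2` of a point of
`Ḡ` can be joined to it by a ray avoiding `W` (concatenate short paths between vertices converging
geometrically fast to the point). Rerouting the two ends of a `W`-avoiding path from `x'` to `y'`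
along such rays shows that `W` still separates every `x'` near `x` from every `y'` near `y`.
Compactness of `U × K` then lets finitely many such `W` cover all pairs.
-/

/-- Enumerates the pairs `(n, j)` with `j ≤ ℓ n` in lexicographic order. -/
def blockIndex (ℓ : ℕ → ℕ) : ℕ → ℕ × ℕ
  | 0 => (0, 0)
  | m + 1 =>
    if (blockIndex ℓ m).2 < ℓ (blockIndex ℓ m).1 then
      ((blockIndex ℓ m).1, (blockIndex ℓ m).2 + 1)
    else ((blockIndex ℓ m).1 + 1, 0)

namespace blockIndex

variable {ℓ : ℕ → ℕ}

lemma snd_le (m : ℕ) : (blockIndex ℓ m).2 ≤ ℓ (blockIndex ℓ m).1 := by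
  induction m with
  | zero => exact Nat.zero_le _
  | succ m =>
    simp only [blockIndex]
    split_ifs with h
    · exact h
    · exact Nat.zero_le _

lemma sum_add_snd (m : ℕ) :
    ∑ i ∈ Finset.range (blockIndex ℓ m).1, (ℓ i + 1) + (blockIndex ℓ m).2 = m := by
  induction m with
  | zero => rfl
  | succ m ih =>
    have := snd_le (ℓ := ℓ) m
    simp only [blockIndex]
    split_ifs with h
    · dsimp only
      omega
    · rw [Finset.sum_range_succ]
      omega

lemma tendsto_fst : Tendsto (fun m => (blockIndex ℓ m).1) atTop atTop := by
  set c : ℕ → ℕ := fun n => ∑ i ∈ Finset.range n, (ℓ i + 1)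
  have hc : StrictMono c := strictMono_nat_of_lt_succ fun n => by
    simp only [c, Finset.sum_range_succ]
    omega
  refine tendsto_atTop_atTop.2 fun N => ⟨c N, fun m hm => ?_⟩
  by_contra! hlt
  have h1 : c ((blockIndex ℓ m).1 + 1) ≤ c N := hc.monotone hlt
  have h2 := sum_add_snd (ℓ := ℓ) m
  have h3 := snd_le (ℓ := ℓ) m
  simp only [c, Finset.sum_range_succ] at h1 hm
  omega

end blockIndex

/-- The concatenation of the finite sequences `π n 0, …, π n (ℓ n)`. -/
def concatSegments {α : Type*} (ℓ : ℕ → ℕ) (π : ℕ → ℕ → α) (m : ℕ) : α :=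
  π (blockIndex ℓ m).1 (blockIndex ℓ m).2

section concatSegments

variable {α : Type*} {ℓ : ℕ → ℕ} {π : ℕ → ℕ → α}

lemma concatSegments_step {S : α → α → Prop} (hlink : ∀ n, π n (ℓ n) = π (n + 1) 0)
    (hS : ∀ n, ∀ k < ℓ n, S (π n k) (π n (k + 1))) (m : ℕ) :
    concatSegments ℓ π m = concatSegments ℓ π (m + 1) ∨
      S (concatSegments ℓ π m) (concatSegments ℓ π (m + 1)) := by
  simp only [concatSegments, blockIndex]
  split_ifs with h
  · exact Or.inr (hS _ _ h)
  · rw [← hlink, le_antisymm (blockIndex.snd_le m) (not_lt.1 h)]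
    exact Or.inl rfl

lemma tendsto_concatSegments {l : Filter α} (h : ∀ s ∈ l, ∀ᶠ n in atTop, ∀ j ≤ ℓ n, π n j ∈ s) :
    Tendsto (concatSegments ℓ π) atTop l := fun s hs =>
  (blockIndex.tendsto_fst.eventually (h s hs)).mono fun m hm => hm _ (blockIndex.snd_le m)

end concatSegments

namespace WGraph

variable {V : Type*} (G : WGraph V)

def deleteEdges (W : Set (Sym2 V)) : WGraph V where
  Adj u v := G.Adj u v ∧ s(u, v) ∉ W
  symm u v h := ⟨G.symm u v h.1, by rw [Sym2.eq_swap]; exact h.2⟩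
  loopless v h := G.loopless v h.1
  R := G.R
  Rsymm := G.Rsymm
  Rpos u v h := G.Rpos u v h.1
  locFin v := (G.locFin v).subset fun _ hu => hu.1

def edgeResistance : Sym2 V → ℝ := Sym2.lift ⟨G.R, G.Rsymm⟩

@[simp] lemma edgeResistance_mk (u v : V) : G.edgeResistance s(u, v) = G.R u v := rfl

lemma exists_pos_le_edgeResistance {W : Set (Sym2 V)} (hWf : W.Finite) (hWs : W ⊆ G.edgeSet) :
    ∃ r > 0, ∀ e ∈ W, r ≤ G.edgeResistance e := by
  have hpos : ∀ e ∈ W, 0 < G.edgeResistance e := by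
    intro e he
    obtain ⟨u, v, huv, rfl⟩ := hWs he
    exact G.Rpos u v huv
  have hle : ∀ᶠ r in 𝓝 0, ∀ e ∈ W, r ≤ G.edgeResistance e :=
    (eventually_all_finite hWf).2 fun e he => eventually_le_nhds (hpos e he)
  have hle' : ∀ᶠ r in 𝓝[>] 0, ∀ e ∈ W, r ≤ G.edgeResistance e := nhdsWithin_le_nhds hle
  obtain ⟨r, hr, hrpos⟩ := (hle'.and self_mem_nhdsWithin).exists
  exact ⟨r, hrpos, hr⟩

variable [MetricSpace V]

lemma dist_le_sum_R (hmet : G.IsPathMetric) {n : ℕ} {p : ℕ → V}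
    (hadj : ∀ k < n, G.Adj (p k) (p (k + 1))) :
    dist (p 0) (p n) ≤ ∑ k ∈ Finset.range n, G.R (p k) (p (k + 1)) := by
  rw [hmet]
  refine csInf_le ⟨0, ?_⟩ ⟨n, p, rfl, rfl, hadj, rfl⟩
  rintro _ ⟨n, p, -, -, hadj, rfl⟩
  exact Finset.sum_nonneg fun k hk => (G.Rpos _ _ (hadj k (Finset.mem_range.1 hk))).le

def LocallyJoinable (ρ : ℝ) : Prop :=
  ∀ ε ≤ ρ, ∀ u v : V, dist u v < ε → ∃ (n : ℕ) (p : ℕ → V), p 0 = u ∧ p n = v ∧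
    (∀ k < n, G.Adj (p k) (p (k + 1))) ∧ ∀ j ≤ n, dist u (p j) < ε

lemma locallyJoinable_deleteEdges (hmet : G.IsPathMetric) (hconn : G.Connected)
    {W : Set (Sym2 V)} {r : ℝ} (hr : ∀ e ∈ W, r ≤ G.edgeResistance e) :
    (G.deleteEdges W).LocallyJoinable r := by
  intro ε hε u v huv
  rw [hmet] at huv
  obtain ⟨_, ⟨n, p, rfl, rfl, hadj, rfl⟩, hlt⟩ := exists_lt_of_csInf_lt (hconn u v) huv
  have hR : ∀ k ∈ Finset.range n, 0 ≤ G.R (p k) (p (k + 1)) := fun k hk =>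
    (G.Rpos _ _ (hadj k (Finset.mem_range.1 hk))).le
  refine ⟨n, p, rfl, rfl, fun k hk => ⟨hadj k hk, fun hW => ?_⟩, fun j hj => ?_⟩
  · have := Finset.single_le_sum hR (Finset.mem_range.2 hk)
    have := hr _ hW
    simp only [edgeResistance_mk] at this
    linarith
  · have := G.dist_le_sum_R hmet fun k hk => hadj k (hk.trans_le hj)
    have := Finset.sum_le_sum_of_subset_of_nonneg (Finset.range_subset_range.2 hj)
      fun k hk _ => hR k hk
    linarith

structure Ray (x : Completion V) where
  p : ℕ → V
  step : ∀ m, p m = p (m + 1) ∨ G.Adj (p m) (p (m + 1))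
  tendsto : Tendsto (fun m => (p m : Completion V)) atTop (𝓝 x)

variable {G}

theorem LocallyJoinable.exists_ray {r : ℝ} (hG : G.LocallyJoinable r) (hr : 0 < r) {v : V}
    {x : Completion V} (hv : dist (v : Completion V) x < r / 2) : ∃ R : G.Ray x, R.p 0 = v := by
  set c : ℕ → ℝ := fun n => r / 2 ^ n with hc
  have hc_le : ∀ n, c n ≤ r := fun n => div_le_self hr.le (one_le_pow₀ one_le_two)
  have hc_succ : ∀ n, c (n + 1) = c n / 2 := fun n => by simp only [hc, pow_succ, div_div]
  obtain ⟨a, ha0, hax⟩ : ∃ a : ℕ → V, a 0 = v ∧ ∀ n, dist (a n : Completion V) x < c n / 2 := by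
    choose b hb using fun n => Completion.denseRange_coe.exists_dist_lt x
      (show 0 < c n / 2 by positivity)
    refine ⟨Function.update b 0 v, by simp, fun n => ?_⟩
    rcases n with _ | n
    · simpa [hc] using hv
    · simpa [dist_comm] using hb (n + 1)
  have hstep : ∀ n, dist (a n) (a (n + 1)) < c n := fun n => by
    rw [← Completion.dist_eq]
    calc dist (a n : Completion V) (a (n + 1))
        ≤ dist (a n : Completion V) x + dist (a (n + 1) : Completion V) x :=
          dist_triangle_right _ _ _
      _ < c n / 2 + c (n + 1) / 2 := add_lt_add (hax n) (hax (n + 1))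
      _ ≤ c n := by rw [hc_succ]; linarith [(by positivity : 0 < c n)]
  choose ℓ π hπ0 hπℓ hπadj hπdist using fun n => hG (c n) (hc_le n) _ _ (hstep n)
  have hlink : ∀ n, π n (ℓ n) = π (n + 1) 0 := fun n => (hπℓ n).trans (hπ0 (n + 1)).symm
  have hc0 : Tendsto c atTop (𝓝 0) :=
    tendsto_const_nhds.div_atTop (tendsto_pow_atTop_atTop_of_one_lt one_lt_two)
  refine ⟨⟨concatSegments ℓ π, concatSegments_step hlink hπadj,
    tendsto_concatSegments (π := fun n j => (π n j : Completion V)) fun s hs => ?_⟩,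
    (hπ0 0).trans ha0⟩
  obtain ⟨ε, hε, hball⟩ := Metric.mem_nhds_iff.1 hs
  filter_upwards [hc0.eventually (gt_mem_nhds (half_pos hε))] with n hn j hj
  apply hball
  rw [Metric.mem_ball]
  calc dist (π n j : Completion V) x
        ≤ dist (π n j : Completion V) (a n) + dist (a n : Completion V) x := dist_triangle _ _ _
    _ < c n + c n / 2 := by
        rw [Completion.dist_eq, dist_comm]
        exact add_lt_add (hπdist n j hj) (hax n)
    _ < ε := by linarith

namespace CPath

variable {x y z : Completion V}

def reverse (γ : G.CPath x y) : G.CPath y x where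
  p k := γ.p (-k)
  step k := by
    have := γ.step (-k - 1)
    rw [sub_add_cancel, ← neg_add'] at this
    exact this.imp Eq.symm (G.symm _ _)
  tendsto_left := by simpa only [neg_neg] using γ.tendsto_right
  tendsto_right := γ.tendsto_left

def glueSeq (γ : G.CPath x y) (M : ℕ) (R : G.Ray z) (k : ℤ) : V :=
  if k ≤ M then γ.p k else R.p (k - M).toNat

lemma glueSeq_of_le (γ : G.CPath x y) {M : ℕ} (R : G.Ray z) {k : ℤ} (hk : k ≤ M) :
    γ.glueSeq M R k = γ.p k := if_pos hk

lemma glueSeq_of_ge (γ : G.CPath x y) {M : ℕ} {R : G.Ray z} (h : γ.p M = R.p 0) {k : ℤ}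
    (hk : M ≤ k) : γ.glueSeq M R k = R.p (k - M).toNat := by
  rcases hk.eq_or_lt with rfl | hlt
  · simpa [glueSeq] using h
  · exact if_neg hlt.not_ge

def glueRay (γ : G.CPath x y) (M : ℕ) (R : G.Ray z) (h : γ.p M = R.p 0) : G.CPath x z where
  p := γ.glueSeq M R
  step k := by
    rcases lt_or_ge k M with hk | hk
    · rw [glueSeq_of_le _ _ hk.le, glueSeq_of_le _ _ hk]
      exact γ.step k
    · rw [glueSeq_of_ge _ h hk, glueSeq_of_ge _ h (by omega),
        show (k + 1 - M).toNat = (k - M).toNat + 1 by omega]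
      exact R.step _
  tendsto_left := γ.tendsto_left.congr fun n => by rw [glueSeq_of_le _ _ (by omega)]
  tendsto_right := by
    refine (R.tendsto.comp (tendsto_sub_atTop_nat M)).congr' ?_
    filter_upwards [eventually_ge_atTop M] with n hn
    rw [Function.comp_apply, glueSeq_of_ge _ h (by omega),
      show ((n : ℤ) - M).toNat = n - M by omega]

end CPath

theorem LocallyJoinable.nonempty_cpath {r : ℝ} (hG : G.LocallyJoinable r) (hr : 0 < r)
    {x y x' y' : Completion V} (γ : G.CPath x' y') (hx : dist x' x < r / 2)
    (hy : dist y' y < r / 2) : Nonempty (G.CPath x y) := by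
  obtain ⟨N, hN⟩ := (γ.tendsto_left.eventually (Metric.isOpen_ball.mem_nhds hx)).exists
  obtain ⟨M, hM⟩ := (γ.tendsto_right.eventually (Metric.isOpen_ball.mem_nhds hy)).exists
  obtain ⟨RL, hRL⟩ := hG.exists_ray hr hN
  obtain ⟨RR, hRR⟩ := hG.exists_ray hr hM
  -- `γ` with its left end rerouted along `RL` to `x`
  let γL := (γ.reverse.glueRay N RL hRL.symm).reverse
  have hγL : γL.p M = RR.p 0 := by
    simp only [γL, CPath.reverse, CPath.glueRay]
    rw [CPath.glueSeq_of_le _ _ (by omega)]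
    simpa [CPath.reverse] using hRR.symm
  exact ⟨γL.glueRay M RR hγL⟩

def Separates (W : Set (Sym2 V)) (x y : Completion V) : Prop :=
  ∀ γ : G.CPath x y, ∃ e ∈ W, γ.uses e

lemma Separates.mono {W W' : Set (Sym2 V)} {x y : Completion V} (h : G.Separates W x y)
    (hW : W ⊆ W') : G.Separates W' x y := fun γ =>
  let ⟨e, he, hγ⟩ := h γ
  ⟨e, hW he, hγ⟩

lemma separates_iff_isEmpty {W : Set (Sym2 V)} {x y : Completion V} :
    G.Separates W x y ↔ IsEmpty ((G.deleteEdges W).CPath x y) := by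
  constructor
  · refine fun h => ⟨fun γ => ?_⟩
    obtain ⟨e, he, k, hne, rfl⟩ := h ⟨γ.p, fun k => (γ.step k).imp_right And.left,
      γ.tendsto_left, γ.tendsto_right⟩
    exact (γ.step k).elim hne fun hk => hk.2 he
  · intro h γ
    by_contra! hγ
    refine h.false ⟨γ.p, fun k => (γ.step k).imp_right fun hk => ⟨hk, fun he => ?_⟩,
      γ.tendsto_left, γ.tendsto_right⟩
    exact hγ _ he ⟨k, fun heq => G.loopless _ (heq ▸ hk), rfl⟩

theorem eventually_separates (hmet : G.IsPathMetric) (hconn : G.Connected)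
    {W : Set (Sym2 V)} (hWf : W.Finite) (hWs : W ⊆ G.edgeSet) {x y : Completion V}
    (h : G.Separates W x y) : ∀ᶠ z in 𝓝 (x, y), G.Separates W z.1 z.2 := by
  obtain ⟨r, hr, hrW⟩ := G.exists_pos_le_edgeResistance hWf hWs
  have hG := G.locallyJoinable_deleteEdges hmet hconn hrW
  rw [separates_iff_isEmpty] at h
  filter_upwards [prod_mem_nhds (Metric.ball_mem_nhds x (half_pos hr))
    (Metric.ball_mem_nhds y (half_pos hr))] with z hz
  exact separates_iff_isEmpty.2 ⟨fun γ => h.false (hG.nonempty_cpath hr γ hz.1 hz.2).some⟩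

theorem exists_separates_of_isCompact {S : Set (Completion V × Completion V)} (hS : IsCompact S)
    (hloc : ∀ z ∈ S, ∃ W : Set (Sym2 V), W.Finite ∧ W ⊆ G.edgeSet ∧
      ∀ᶠ z' in 𝓝 z, G.Separates W z'.1 z'.2) :
    ∃ W : Set (Sym2 V), W.Finite ∧ W ⊆ G.edgeSet ∧ ∀ z ∈ S, G.Separates W z.1 z.2 := by
  refine hS.induction_on ⟨∅, Set.finite_empty, Set.empty_subset _, fun _ h => h.elim⟩
    (fun _ _ hst ⟨W, hWf, hWs, hW⟩ => ⟨W, hWf, hWs, fun z hz => hW z (hst hz)⟩)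
    (fun _ _ ⟨W, hWf, hWs, hW⟩ ⟨W', hWf', hWs', hW'⟩ =>
      ⟨W ∪ W', hWf.union hWf', Set.union_subset hWs hWs', fun z hz =>
        hz.elim (fun hz => (hW z hz).mono Set.subset_union_left)
          (fun hz => (hW' z hz).mono Set.subset_union_right)⟩)
    fun z hz => ?_
  obtain ⟨W, hWf, hWs, hW⟩ := hloc z hz
  exact ⟨_, nhdsWithin_le_nhds hW, W, hWf, hWs, fun _ h => h⟩

end WGraph

theorem weaklyConnected_separates_compacts_general {V : Type*} [MetricSpace V]
    (G : WGraph V) (hmet : G.IsPathMetric) (hconn : G.Connected)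
    (hw : G.WeaklyConnected)
    (U K : Set (UniformSpace.Completion V))
    (hU : IsCompact U) (hK : IsCompact K) (hdisj : Disjoint U K) :
    ∃ W : Set (Sym2 V), W.Finite ∧ W ⊆ G.edgeSet ∧
      ∀ x ∈ U, ∀ y ∈ K, ∀ γ : G.CPath x y, ∃ e ∈ W, γ.uses e := by
  obtain ⟨W, hWf, hWs, hW⟩ := G.exists_separates_of_isCompact (hU.prod hK) fun z hz => by
    obtain ⟨W, hWf, hWs, hW⟩ := hw z.1 z.2 (hdisj.ne_of_mem hz.1 hz.2)
    exact ⟨W, hWf, hWs, WGraph.eventually_separates hmet hconn hWf hWs hW⟩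
  exact ⟨W, hWf, hWs, fun x hx y hy => hW (x, y) ⟨hx, hy⟩⟩

/-- in a weakly connected completion, disjoint compact sets are
separated by a finite edge set met by every path between them. -/
theorem weaklyConnected_separates_compacts {V : Type*} [MetricSpace V] [Countable V]
    (G : WGraph V) (hmet : G.IsPathMetric) (hconn : G.Connected)
    (hw : G.WeaklyConnected)
    (U K : Set (UniformSpace.Completion V))
    (hU : IsCompact U) (hK : IsCompact K) (hdisj : Disjoint U K) :
    ∃ W : Set (Sym2 V), W.Finite ∧ W ⊆ G.edgeSet ∧
      ∀ x ∈ U, ∀ y ∈ K, ∀ γ : G.CPath x y, ∃ e ∈ W, γ.uses e :=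
  weaklyConnected_separates_compacts_general G hmet hconn hw U K hU hK hdisj
end
end

section
/- If the completion Ḡ of an edge-weighted graph G is weakly connected, then Ḡ is totally disconnected as a topological space. -/
open UniformSpace Filter Topology
open scoped ENNReal

noncomputable section

/-!
Suppose a connected set contains points `x ≠ y`, let `W` be a finite set of edges met by every path
from `x` to `y`, and let `r > 0` be the least resistance of an edge of `W`. For a path metric,
vertices at distance `< r` are joined by walks all of whose edges have resistance `< r`. Chaining
through `r`-close points of the connected set, and approximating `x` and `y` by vertices converging
geometrically fast, these walks concatenate to a path from `x` to `y` that misses `W`.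
-/

/-- `i ↦ P (s i).1 (s i).2` runs through `P 0`, then `P 1`, …, passing from `P k` to `P (k + 1)`
by a stationary step as soon as `P k` reaches the starting point of `P (k + 1)`. -/
lemma exists_infinite_concat {α : Type*} (P : ℕ → ℕ → α) (hP : ∀ k, ∃ j, P k j = P (k + 1) 0) :
    ∃ s : ℕ → ℕ × ℕ, s 0 = (0, 0) ∧
      (∀ i, P (s (i + 1)).1 (s (i + 1)).2 = P (s i).1 (s i).2 ∨
        s (i + 1) = ((s i).1, (s i).2 + 1)) ∧
      Tendsto (fun i => (s i).1) atTop atTop := by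
  classical
  let next : ℕ × ℕ → ℕ × ℕ := fun kj =>
    if P kj.1 kj.2 = P (kj.1 + 1) 0 then (kj.1 + 1, 0) else (kj.1, kj.2 + 1)
  let s : ℕ → ℕ × ℕ := fun i => next^[i] (0, 0)
  have hs : ∀ i, s (i + 1) = next (s i) := fun i => Function.iterate_succ_apply' next i (0, 0)
  have hreach : ∀ k, ∃ i, s i = (k, 0) := by
    intro k
    induction k with
    | zero => exact ⟨0, rfl⟩
    | succ k ih =>
      obtain ⟨i, hi⟩ := ih
      have hwalk : ∀ m ≤ Nat.find (hP k), s (i + m) = (k, m) := by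
        intro m hm
        induction m with
        | zero => exact hi
        | succ m ihm =>
          rw [← add_assoc, hs, ihm (by omega)]
          simp [next, Nat.find_min (hP k) (by omega : m < Nat.find (hP k))]
      refine ⟨i + Nat.find (hP k) + 1, ?_⟩
      rw [hs, hwalk _ le_rfl]
      simp [next, Nat.find_spec (hP k)]
  refine ⟨s, rfl, fun i => ?_, ?_⟩
  · rw [hs]
    by_cases h : P (s i).1 (s i).2 = P ((s i).1 + 1) 0
    · left; simp [next, h]
    · right; simp [next, h]
  · refine tendsto_atTop_atTop_of_monotone (monotone_nat_of_le_succ fun i => ?_) fun k => ?_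
    · rw [hs]; dsimp only [next]; split_ifs <;> simp
    · obtain ⟨i, hi⟩ := hreach k
      exact ⟨i, by simp [hi]⟩

namespace WGraph

variable {V : Type*} (G : WGraph V)

def edgeR : Sym2 V → ℝ := Sym2.lift ⟨G.R, G.Rsymm⟩

lemma edgeR_pos {e : Sym2 V} (he : e ∈ G.edgeSet) : 0 < G.edgeR e := by
  obtain ⟨u, v, huv, rfl⟩ := he
  exact G.Rpos u v huv

lemma exists_pos_forall_le_edgeR {W : Set (Sym2 V)} (hW : W.Finite) (hWE : W ⊆ G.edgeSet) :
    ∃ r > 0, ∀ e ∈ W, r ≤ G.edgeR e := by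
  rcases W.eq_empty_or_nonempty with rfl | hne
  · exact ⟨1, one_pos, by simp⟩
  · obtain ⟨e, he, hmin⟩ := W.exists_min_image G.edgeR hW hne
    exact ⟨G.edgeR e, G.edgeR_pos (hWE he), hmin⟩

def ShortStep (δ : ℝ) (a b : V) : Prop := a = b ∨ (G.Adj a b ∧ G.R a b < δ)

variable {G}

lemma ShortStep.symm {δ : ℝ} {a b : V} (h : G.ShortStep δ a b) : G.ShortStep δ b a :=
  h.imp Eq.symm fun ⟨hab, hR⟩ => ⟨G.symm a b hab, G.Rsymm a b ▸ hR⟩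

lemma ShortStep.mono {δ δ' : ℝ} {a b : V} (h : G.ShortStep δ a b) (hδ : δ ≤ δ') :
    G.ShortStep δ' a b :=
  h.imp_right fun ⟨hab, hR⟩ => ⟨hab, hR.trans_le hδ⟩

variable [MetricSpace V]

lemma IsPathMetric.dist_le_sum (hmet : G.IsPathMetric) {p : ℕ → V} {n : ℕ}
    (hadj : ∀ k < n, G.Adj (p k) (p (k + 1))) :
    dist (p 0) (p n) ≤ ∑ k ∈ Finset.range n, G.R (p k) (p (k + 1)) := by
  rw [hmet]
  refine csInf_le ⟨0, ?_⟩ ⟨n, p, rfl, rfl, hadj, rfl⟩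
  rintro _ ⟨m, q, -, -, hq, rfl⟩
  exact Finset.sum_nonneg fun k hk => (G.Rpos _ _ (hq k (Finset.mem_range.1 hk))).le

variable (G)

lemma exists_shortStep_walk (hmet : G.IsPathMetric) (hconn : G.Connected) {a b : V} {t : ℝ}
    (hab : dist a b < t) :
    ∃ p : ℕ → V, p 0 = a ∧ (∃ n, p n = b) ∧
      ∀ j, G.ShortStep t (p j) (p (j + 1)) ∧ dist a (p j) < t := by
  obtain ⟨_, ⟨n, p, rfl, rfl, hadj, rfl⟩, hlt⟩ :=
    exists_lt_of_csInf_lt (hconn a b) (hmet a b ▸ hab)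
  have hR : ∀ k < n, 0 ≤ G.R (p k) (p (k + 1)) := fun k hk => (G.Rpos _ _ (hadj k hk)).le
  refine ⟨fun j => p (min j n), by simp, ⟨n, by simp⟩, fun j => ⟨?_, ?_⟩⟩
  · dsimp only
    by_cases hj : j < n
    · right
      rw [min_eq_left hj.le, min_eq_left hj]
      refine ⟨hadj j hj, lt_of_le_of_lt ?_ hlt⟩
      exact Finset.single_le_sum (fun k hk => hR k (Finset.mem_range.1 hk))
        (Finset.mem_range.2 hj)
    · left
      rw [min_eq_right (not_lt.1 hj), min_eq_right (by omega)]
  · calc dist (p 0) (p (min j n))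
        ≤ ∑ k ∈ Finset.range (min j n), G.R (p k) (p (k + 1)) :=
          hmet.dist_le_sum fun k hk => hadj k (hk.trans_le (min_le_right j n))
      _ ≤ ∑ k ∈ Finset.range n, G.R (p k) (p (k + 1)) :=
          Finset.sum_le_sum_of_subset_of_nonneg (Finset.range_subset_range.2 (min_le_right j n))
            fun k hk _ => hR k (Finset.mem_range.1 hk)
      _ < t := hlt

lemma reflTransGen_shortStep_of_dist_lt (hmet : G.IsPathMetric) (hconn : G.Connected)
    {a b : V} {t : ℝ} (hab : dist a b < t) : Relation.ReflTransGen (G.ShortStep t) a b := by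
  obtain ⟨p, rfl, ⟨n, rfl⟩, hp⟩ := G.exists_shortStep_walk hmet hconn hab
  clear hab
  induction n with
  | zero => exact .refl
  | succ n ih => exact ih.tail (hp n).1

def ShortRayTo (δ : ℝ) (a : V) (x : Completion V) : Prop :=
  ∃ q : ℕ → V, q 0 = a ∧ (∀ n, G.ShortStep δ (q n) (q (n + 1))) ∧
    Tendsto (fun n => (q n : Completion V)) atTop (𝓝 x)

variable {G}

lemma ShortRayTo.head {δ : ℝ} {a b : V} {x : Completion V}
    (hab : Relation.ReflTransGen (G.ShortStep δ) a b) (hb : G.ShortRayTo δ b x) :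
    G.ShortRayTo δ a x := by
  induction hab using Relation.ReflTransGen.head_induction_on with
  | refl => exact hb
  | head hstep _ ih =>
    obtain ⟨q, hq0, hq, hqx⟩ := ih
    refine ⟨fun | 0 => _ | n + 1 => q n, rfl, fun n => ?_, ?_⟩
    · cases n with
      | zero => exact (show G.ShortStep δ _ (q 0) from hq0 ▸ hstep)
      | succ n => exact hq n
    · exact (tendsto_add_atTop_iff_nat 1).1 hqx

variable (G)

lemma shortRayTo_of_dist_lt (hmet : G.IsPathMetric) (hconn : G.Connected) {δ : ℝ} {a : V}
    {x : Completion V} (hax : dist (a : Completion V) x < δ / 4) : G.ShortRayTo δ a x := by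
  have hδ : 0 < δ := by linarith [dist_nonneg (x := (a : Completion V)) (y := x)]
  -- waypoints `c k` with `dist (c k) x < ρ k` are `2 ρ k ≤ δ / 2` apart, and the walks
  -- between consecutive waypoints stay within `2 ρ k` of them
  set ρ : ℕ → ℝ := fun k => δ / 4 * (1 / 2) ^ k with hρ
  have hρpos : ∀ k, 0 < ρ k := fun k => by positivity
  have hρle : ∀ k, ρ k ≤ δ / 4 := fun k =>
    mul_le_of_le_one_right (by positivity) (pow_le_one₀ (by norm_num) (by norm_num))
  have hρ0 : Tendsto ρ atTop (𝓝 0) := by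
    simpa using
      (tendsto_pow_atTop_nhds_zero_of_lt_one (by norm_num) (by norm_num)).const_mul (δ / 4)
  obtain ⟨d, hd⟩ : ∃ d : ℕ → V, ∀ k, dist x (d k) < ρ k :=
    ⟨fun k => _, fun k => (Completion.denseRange_coe.exists_dist_lt x (hρpos k)).choose_spec⟩
  set c : ℕ → V := fun k => if k = 0 then a else d k with hc
  have hcx : ∀ k, dist (c k : Completion V) x < ρ k := by
    rintro (_ | k)
    · simpa [hc, hρ] using hax
    · simpa [hc, dist_comm] using hd (k + 1)
  have hcc : ∀ k, dist (c k) (c (k + 1)) < 2 * ρ k := by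
    intro k
    rw [← Completion.dist_eq]
    calc _ ≤ dist (c k : Completion V) x + dist (c (k + 1) : Completion V) x :=
          dist_triangle_right _ _ _
      _ < ρ k + ρ (k + 1) := add_lt_add (hcx k) (hcx (k + 1))
      _ = 2 * ρ k - ρ k / 2 := by simp only [hρ, pow_succ]; ring
      _ ≤ 2 * ρ k := by linarith [hρpos k]
  choose P hP0 hPend hP using fun k => G.exists_shortStep_walk hmet hconn (hcc k)
  obtain ⟨s, hs0, hs, hκ⟩ := exists_infinite_concat P fun k => by
    obtain ⟨n, hn⟩ := hPend k
    exact ⟨n, by rw [hn, hP0]⟩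
  refine ⟨fun i => P (s i).1 (s i).2, by simp [hs0, hP0, hc], fun i => ?_, ?_⟩
  · rcases hs i with h | h
    · exact Or.inl h.symm
    · show G.ShortStep δ (P (s i).1 (s i).2) (P (s (i + 1)).1 (s (i + 1)).2)
      rw [h]
      exact (hP _ _).1.mono (by linarith [hρle (s i).1])
  · refine tendsto_iff_dist_tendsto_zero.2 (squeeze_zero (fun _ => dist_nonneg) (fun i => ?_)
      ((by simpa using hρ0.const_mul 3 : Tendsto (fun k => 3 * ρ k) atTop (𝓝 0)).comp hκ))
    calc _ ≤ dist (P (s i).1 (s i).2 : Completion V) (c (s i).1) +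
            dist (c (s i).1 : Completion V) x := dist_triangle _ _ _
      _ ≤ 2 * ρ (s i).1 + ρ (s i).1 := by
          rw [Completion.dist_eq, dist_comm]
          exact add_le_add (hP _ _).2.le (hcx _).le
      _ = 3 * ρ (s i).1 := by ring

/-- Being approximated by vertices joined by short steps is an equivalence relation with open
classes, hence it relates any two points of a preconnected set. -/
lemma exists_reflTransGen_shortStep_of_isPreconnected (hmet : G.IsPathMetric)
    (hconn : G.Connected) {S : Set (Completion V)} (hS : IsPreconnected S) {x y : Completion V}
    (hx : x ∈ S) (hy : y ∈ S) {δ : ℝ} (hδ : 0 < δ) :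
    ∃ a b : V, dist (a : Completion V) x < δ / 4 ∧ dist (b : Completion V) y < δ / 4 ∧
      Relation.ReflTransGen (G.ShortStep δ) a b := by
  refine hS.induction₂' (fun x y => ∃ a b : V, dist (a : Completion V) x < δ / 4 ∧
    dist (b : Completion V) y < δ / 4 ∧ Relation.ReflTransGen (G.ShortStep δ) a b)
    (fun x _ => ?_) (fun x y z _ _ _ => ?_) hx hy
  · obtain ⟨a, ha⟩ := Completion.denseRange_coe.exists_dist_lt x (by positivity : 0 < δ / 8)
    filter_upwards [nhdsWithin_le_nhds (Metric.ball_mem_nhds x (by positivity : 0 < δ / 8))]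
      with y hy
    rw [dist_comm] at ha
    have hax : dist (a : Completion V) x < δ / 4 := by linarith
    have hay : dist (a : Completion V) y < δ / 4 := by
      linarith [dist_triangle_right (a : Completion V) y x, Metric.mem_ball.1 hy]
    exact ⟨⟨a, a, hax, hay, .refl⟩, ⟨a, a, hay, hax, .refl⟩⟩
  · rintro ⟨a, b, ha, hb, hab⟩ ⟨b', c, hb', hc, hbc⟩
    have hbb' : dist b b' < δ := by
      rw [← Completion.dist_eq]
      linarith [dist_triangle_right (b : Completion V) b' y]
    exact ⟨a, c, ha, hc,
      hab.trans ((G.reflTransGen_shortStep_of_dist_lt hmet hconn hbb').trans hbc)⟩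

variable {G}

lemma exists_cPath_of_shortRayTo {δ : ℝ} {a : V} {x y : Completion V}
    (hx : G.ShortRayTo δ a x) (hy : G.ShortRayTo δ a y) :
    ∃ γ : G.CPath x y, ∀ e, γ.uses e → G.edgeR e < δ := by
  obtain ⟨l, hl0, hl, hlx⟩ := hx
  obtain ⟨r, hr0, hr, hry⟩ := hy
  let p : ℤ → V := fun k => if k < 0 then l (-k).toNat else r k.toNat
  have hp_nat : ∀ n : ℕ, p n = r n := fun n => by simp [p]
  have hp_neg : ∀ n : ℕ, p (-n) = l n := by
    rintro (_ | n)
    · simp [p, hl0, hr0]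
    · simp only [p]; rw [if_pos (by omega)]; congr 1
  have hp : ∀ k, G.ShortStep δ (p k) (p (k + 1)) := by
    intro k
    rcases le_or_gt 0 k with hk | hk
    · lift k to ℕ using hk
      exact_mod_cast (hp_nat k ▸ hp_nat (k + 1) ▸ hr k)
    · obtain ⟨n, rfl⟩ : ∃ n : ℕ, k = -(n + 1 : ℕ) := ⟨(-k - 1).toNat, by omega⟩
      rw [show -((n + 1 : ℕ) : ℤ) + 1 = -(n : ℤ) by push_cast; ring, hp_neg, hp_neg]
      exact (hl n).symm
  refine ⟨⟨p, fun k => (hp k).imp_right And.left, ?_, ?_⟩, ?_⟩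
  · simpa only [hp_neg] using hlx
  · simpa only [hp_nat] using hry
  · rintro _ ⟨k, hne, rfl⟩
    exact ((hp k).resolve_left hne).2

end WGraph

theorem weaklyConnected_totallyDisconnected_general {V : Type*} [MetricSpace V]
    (G : WGraph V) (hmet : G.IsPathMetric) (hconn : G.Connected)
    (hw : G.WeaklyConnected) :
    TotallyDisconnectedSpace (UniformSpace.Completion V) := by
  refine ⟨fun S _ hS x hx y hy => by_contra fun hxy => ?_⟩
  obtain ⟨W, hWfin, hWE, hWsep⟩ := hw x y hxy
  obtain ⟨r, hr, hrW⟩ := G.exists_pos_forall_le_edgeR hWfin hWE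
  obtain ⟨a, b, hax, hby, hab⟩ :=
    G.exists_reflTransGen_shortStep_of_isPreconnected hmet hconn hS hx hy hr
  obtain ⟨γ, hγ⟩ := WGraph.exists_cPath_of_shortRayTo (G.shortRayTo_of_dist_lt hmet hconn hax)
    (.head hab (G.shortRayTo_of_dist_lt hmet hconn hby))
  obtain ⟨e, heW, hγe⟩ := hWsep γ
  exact (hγ e hγe).not_ge (hrW e heW)

/-- a weakly connected completion is totally disconnected. -/
theorem weaklyConnected_totallyDisconnected {V : Type*} [MetricSpace V] [Countable V]
    (G : WGraph V) (hmet : G.IsPathMetric) (hconn : G.Connected)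
    (hw : G.WeaklyConnected) :
    TotallyDisconnectedSpace (UniformSpace.Completion V) :=
  weaklyConnected_totallyDisconnected_general G hmet hconn hw
end
end

section
/- Every eventually flat function φ on the vertex set of G extends continuously to the metric completion Ḡ. -/
open UniformSpace Filter Topology
open scoped ENNReal

noncomputable section

/-- every eventually flat function extends continuously to the
completion. -/
theorem eventuallyFlat_extends {V : Type*} [MetricSpace V] [Countable V]
    (G : WGraph V) (hmet : G.IsPathMetric) (hconn : G.Connected)
    (φ : V → ℝ) (hφ : G.EventuallyFlat φ) :
    ∃ Φ : UniformSpace.Completion V → ℝ, Continuous Φ ∧ ∀ v : V, Φ ↑v = φ v := by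
  classical
  -- find a positive lower bound δ for resistances of "bad" edges
  obtain ⟨δ, hδpos, hδ⟩ : ∃ δ > 0, ∀ p ∈ hφ.toFinset, δ ≤ G.R p.1 p.2 := by
    rcases hφ.toFinset.eq_empty_or_nonempty with h | h
    · exact ⟨1, one_pos, by simp [h]⟩
    · refine ⟨hφ.toFinset.inf' h (fun p => G.R p.1 p.2), ?_, fun p hp => Finset.inf'_le _ hp⟩
      rw [gt_iff_lt, Finset.lt_inf'_iff]
      intro p hp
      exact G.Rpos p.1 p.2 ((hφ.mem_toFinset.mp hp).1)
  -- φ is uniformly continuous: points at distance < δ have equal values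
  have key : ∀ u v : V, dist u v < δ → φ u = φ v := by
    intro u v huv
    rw [hmet u v] at huv
    have hbdd : BddBelow (G.pathLengths u v) := by
      refine ⟨0, fun L hL => ?_⟩
      obtain ⟨n, p, h0, hn, hadj, hL⟩ := hL
      rw [hL]
      exact Finset.sum_nonneg fun k hk =>
        (G.Rpos _ _ (hadj k (Finset.mem_range.mp hk))).le
    obtain ⟨L, hL, hLlt⟩ := exists_lt_of_csInf_lt (hconn u v) huv
    obtain ⟨n, p, h0, hn, hadj, hLeq⟩ := hL
    -- each edge on the path is "good"
    have hgood : ∀ k < n, φ (p k) = φ (p (k + 1)) := by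
      intro k hk
      by_contra hne
      have hmem : ((p k, p (k + 1)) : V × V) ∈ hφ.toFinset :=
        hφ.mem_toFinset.mpr ⟨hadj k hk, hne⟩
      have h1 : δ ≤ G.R (p k) (p (k + 1)) := hδ _ hmem
      have h2 : G.R (p k) (p (k + 1)) ≤ L := by
        rw [hLeq]
        exact Finset.single_le_sum
          (fun i hi => (G.Rpos _ _ (hadj i (Finset.mem_range.mp hi))).le)
          (Finset.mem_range.mpr hk)
      linarith
    have : ∀ m ≤ n, φ (p 0) = φ (p m) := by
      intro m hm
      induction m with
      | zero => rfl
      | succ m ih =>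
        exact (ih (Nat.le_of_succ_le hm)).trans (hgood m (Nat.lt_of_succ_le hm))
    have := this n le_rfl
    rw [h0, hn] at this
    exact this
  have hUC : UniformContinuous φ := by
    rw [Metric.uniformContinuous_iff]
    intro ε hε
    refine ⟨δ, hδpos, fun {a b} hab => ?_⟩
    simp [key a b hab, hε]
  refine ⟨Completion.extension φ, Completion.continuous_extension, fun v => ?_⟩
  exact Completion.extension_coe hUC v
end
end
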